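/- arXiv:1005.5523 — 11 statements merged into one kernel-verified Lean document; each statement's English description precedes it below -/
import Mathlib

section
/- Let K be a valued field with valuation v and suppose F(X,Y) = X^2 + (XY - 1)^2 over the real Laurent series field ℝ((t)) with the t-adic valuation. Then F has no zero in ℝ((t))^2, and the set {v(F(a,b)) : a, b ∈ ℝ((t))} has no maximal element (indeed v(F(t^n, t^{-n})) = 2n for all n). -/
/-!
Ordered lexicographically, `ℝ((t))` is an ordered field, so `a² + (ab - 1)²` is positive: either
`a ≠ 0`, or `a = 0` and the second square is `1`. On the other hand, at `a = tⁿ`, `b = t⁻ⁿ` the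
second square vanishes and the value is `v(t²ⁿ) = 2n`, which exceeds any given value.
-/

open HahnSeries

theorem sq_add_sq_mul_sub_one_pos {R : Type*} [Ring R] [LinearOrder R] [IsStrictOrderedRing R]
    (a b : R) : 0 < a ^ 2 + (a * b - 1) ^ 2 := by
  rcases eq_or_ne a 0 with rfl | ha
  · simp
  · exact add_pos_of_pos_of_nonneg (pow_two_pos_of_ne_zero ha) (sq_nonneg _)

theorem sq_add_sq_mul_inv_sub_one {K : Type*} [Field K] {x : K} (hx : x ≠ 0) :
    x ^ 2 + (x * x⁻¹ - 1) ^ 2 = x ^ 2 := by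
  simp [mul_inv_cancel₀ hx]

namespace HahnSeries

variable {R : Type*} [Ring R] [IsDomain R]

theorem addVal_single {Γ : Type*} [AddCancelCommMonoid Γ] [LinearOrder Γ]
    [IsOrderedCancelAddMonoid Γ] (g : Γ) {r : R} (hr : r ≠ 0) :
    addVal Γ R (single g r) = g := by
  rw [addVal_apply, orderTop_single hr]

theorem addVal_single_one_pow_sq (n : ℕ) :
    addVal ℤ R ((single (1 : ℤ) (1 : R) ^ n) ^ 2) = ((2 * n : ℤ) : WithTop ℤ) := by
  rw [AddValuation.map_pow, AddValuation.map_pow, addVal_single _ one_ne_zero]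
  norm_cast
  simp [mul_comm]

theorem exists_addVal_lt_two_mul {x : LaurentSeries R} (hx : x ≠ 0) :
    ∃ n : ℕ, addVal ℤ R x < ((2 * n : ℤ) : WithTop ℤ) := by
  refine ⟨x.order.toNat + 1, ?_⟩
  rw [addVal_apply_of_ne hx, WithTop.coe_lt_coe]
  omega

end HahnSeries

/-- Over the real Laurent series field `ℝ((t))` with its `t`-adic (additive) valuation `v`,
the polynomial `F(X,Y) = X² + (XY - 1)²` has no zero, the set of values
`{v (F a b) : a b}` has no maximal element, and indeed `v (F (tⁿ) (t⁻ⁿ)) = 2n`. -/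
theorem ershov_flaw :
    (∀ a b : LaurentSeries ℝ, a ^ 2 + (a * b - 1) ^ 2 ≠ 0) ∧
    (∀ a b : LaurentSeries ℝ, ∃ c d : LaurentSeries ℝ,
      addVal ℤ ℝ (a ^ 2 + (a * b - 1) ^ 2) < addVal ℤ ℝ (c ^ 2 + (c * d - 1) ^ 2)) ∧
    (∀ n : ℕ,
      addVal ℤ ℝ ((HahnSeries.single (1 : ℤ) (1 : ℝ) ^ n) ^ 2 +
          (HahnSeries.single (1 : ℤ) (1 : ℝ) ^ n *
            (HahnSeries.single (1 : ℤ) (1 : ℝ) ^ n)⁻¹ - 1) ^ 2)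
        = ((2 * n : ℤ) : WithTop ℤ)) := by
  have no_zero : ∀ a b : LaurentSeries ℝ, a ^ 2 + (a * b - 1) ^ 2 ≠ 0 := fun a b =>
    (sq_add_sq_mul_sub_one_pos (toLex a) (toLex b)).ne'
  have addVal_at_pow : ∀ n : ℕ,
      addVal ℤ ℝ ((single (1 : ℤ) (1 : ℝ) ^ n) ^ 2 +
          (single (1 : ℤ) (1 : ℝ) ^ n * (single (1 : ℤ) (1 : ℝ) ^ n)⁻¹ - 1) ^ 2)
        = ((2 * n : ℤ) : WithTop ℤ) := fun n => by
    rw [sq_add_sq_mul_inv_sub_one (pow_ne_zero n (single_ne_zero one_ne_zero)),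
      addVal_single_one_pow_sq]
  refine ⟨no_zero, fun a b => ?_, addVal_at_pow⟩
  obtain ⟨n, hn⟩ := exists_addVal_lt_two_mul (no_zero a b)
  exact ⟨_, _, hn.trans_eq (addVal_at_pow n).symm⟩
end

section
/- Let K be a valued field that is not algebraically closed. Let f(x) = x^n + a_{n-1}x^{n-1} + ... + a_0 ∈ K[x] have no zero in K, let G(X,Y) = X^n + a_{n-1}X^{n-1}Y + ... + a_0 Y^n be its homogenization, and set F(X,Y) = G(X, XY - 1). Then F has no zero in K^2, and the set {v(F(a,b)) : a,b ∈ K} ⊆ Γ ∪ {∞} has no maximal element. -/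
/-!
A zero `(c, d)` of `F` would give a zero `(c, cd - 1)` of `G`; it is not `(0, 0)`, and `G`
has no other zeros because `G(x, y) = yⁿ f(x / y)` for `y ≠ 0` and `G(x, 0) = xⁿ`. For the
value set, `F(c, c⁻¹) = G(c, 0) = cⁿ` has valuation `n • v c`, which is unbounded in `Γ` as `c`
varies.
-/

open Finset

def homogenize {R : Type*} [CommSemiring R] {n : ℕ} (a : Fin n → R) (x y : R) : R :=
  x ^ n + ∑ i : Fin n, a i * x ^ (i : ℕ) * y ^ (n - (i : ℕ))

section Homogenize

variable {n : ℕ}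

theorem homogenize_zero_right {R : Type*} [CommSemiring R] (a : Fin n → R) (x : R) :
    homogenize a x 0 = x ^ n := by
  simp [homogenize, zero_pow, Nat.sub_ne_zero_of_lt]

variable {K : Type*} [Field K]

theorem homogenize_eq_pow_mul {y : K} (hy : y ≠ 0) (a : Fin n → K) (x : K) :
    homogenize a x y = y ^ n * homogenize a (x / y) 1 := by
  simp only [homogenize, one_pow, mul_one, mul_add, mul_sum]
  congr 1
  · rw [div_pow, mul_div_cancel₀ _ (pow_ne_zero _ hy)]
  · refine sum_congr rfl fun i _ => ?_
    have hsplit : y ^ n = y ^ (n - (i : ℕ)) * y ^ (i : ℕ) := by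
      rw [← pow_add, Nat.sub_add_cancel i.2.le]
    rw [hsplit, div_pow]
    field_simp

theorem homogenize_ne_zero {a : Fin n → K}
    (hroot : ∀ t : K, homogenize a t 1 ≠ 0) {x y : K} (hxy : x ≠ 0 ∨ y ≠ 0) :
    homogenize a x y ≠ 0 := by
  by_cases hy : y = 0
  · rw [hy, homogenize_zero_right]
    exact pow_ne_zero _ (hxy.resolve_right (not_not.mpr hy))
  · rw [homogenize_eq_pow_mul hy]
    exact mul_ne_zero (pow_ne_zero _ hy) (hroot _)

end Homogenize

theorem exists_lt_nsmul_of_ne_zero {Γ : Type*} [AddCommMonoid Γ] [LinearOrder Γ]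
    [IsOrderedAddMonoid Γ] [NoMaxOrder Γ] (γ₀ : Γ) {n : ℕ} (hn : n ≠ 0) :
    ∃ γ : Γ, γ₀ < n • γ := by
  obtain ⟨γ, hγ⟩ := exists_gt (max γ₀ 0)
  exact ⟨γ, (le_max_left _ _).trans_lt <|
    hγ.trans_le (le_self_nsmul ((le_max_right _ _).trans hγ.le) hn)⟩

theorem AddValuation.exists_lt_map_pow {K Γ : Type*} [Field K] [AddCommGroup Γ] [LinearOrder Γ]
    [IsOrderedAddMonoid Γ] [Nontrivial Γ] (v : AddValuation K (WithTop Γ))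
    (hsurj : ∀ γ : Γ, ∃ x : K, v x = (γ : WithTop Γ)) {n : ℕ} (hn : n ≠ 0)
    {w : WithTop Γ} (hw : w ≠ ⊤) : ∃ x : K, x ≠ 0 ∧ w < v (x ^ n) := by
  obtain ⟨γ₀, rfl⟩ := WithTop.ne_top_iff_exists.mp hw
  obtain ⟨γ, hγ⟩ := exists_lt_nsmul_of_ne_zero γ₀ hn
  obtain ⟨x, hx⟩ := hsurj γ
  refine ⟨x, v.ne_top_iff.mp (hx ▸ WithTop.coe_ne_top), ?_⟩
  rw [v.map_pow, hx, ← WithTop.coe_nsmul]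
  exact WithTop.coe_lt_coe.mpr hγ

/-- Let `(K, v)` be a nontrivially valued field with value group `Γ` (so `v` is onto
`Γ ∪ {∞}`) which is not algebraically closed, witnessed by the monic polynomial
`f(x) = xⁿ + a_{n-1}x^{n-1} + ⋯ + a₀` without zeros in `K`.  With
`G(X,Y) = Xⁿ + a_{n-1}X^{n-1}Y + ⋯ + a₀Yⁿ` the homogenization of `f` and
`F(X,Y) = G(X, XY - 1)`, the polynomial `F` has no zero in `K²` and the value set
`{v (F a b) : a b ∈ K}` has no maximal element. -/
theorem ershov_original_definition_fails {K Γ : Type*} [Field K]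
    [AddCommGroup Γ] [LinearOrder Γ] [IsOrderedAddMonoid Γ] [Nontrivial Γ]
    (v : AddValuation K (WithTop Γ))
    (hsurj : ∀ γ : Γ, ∃ x : K, v x = (γ : WithTop Γ))
    (n : ℕ) (hn : 0 < n) (a : Fin n → K)
    (hroot : ∀ x : K, x ^ n + ∑ i : Fin n, a i * x ^ (i : ℕ) ≠ 0) :
    (∀ c d : K,
      c ^ n + ∑ i : Fin n, a i * c ^ (i : ℕ) * (c * d - 1) ^ (n - (i : ℕ)) ≠ 0) ∧
    (∀ c d : K, ∃ c' d' : K,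
      v (c ^ n + ∑ i : Fin n, a i * c ^ (i : ℕ) * (c * d - 1) ^ (n - (i : ℕ))) <
      v (c' ^ n + ∑ i : Fin n, a i * c' ^ (i : ℕ) * (c' * d' - 1) ^ (n - (i : ℕ)))) := by
  have hG : ∀ t : K, homogenize a t 1 ≠ 0 := fun t => by simpa [homogenize] using hroot t
  have hF : ∀ c d : K, homogenize a c (c * d - 1) ≠ 0 := fun c d =>
    homogenize_ne_zero hG <| or_iff_not_imp_left.mpr fun hc => by simp [not_not.mp hc]
  refine ⟨hF, fun c d => ?_⟩
  obtain ⟨x, hx, hlt⟩ := v.exists_lt_map_pow hsurj hn.ne' (v.ne_top_iff.mpr (hF c d))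
  refine ⟨x, x⁻¹, ?_⟩
  show v (homogenize a c (c * d - 1)) < v (homogenize a x (x * x⁻¹ - 1))
  rwa [mul_inv_cancel₀ hx, sub_self, homogenize_zero_right]
end

section
/- An ordered abelian group Γ is regular if and only if Γ/Δ is divisible for every nonzero convex subgroup Δ of Γ. -/
/-!
If `0 < d ∈ Δ`, the interval `(γ - n • d, γ + n • d)` contains the `n` points `γ + k • d`, so
regularity puts some `n • δ` in it, and convexity of `Δ` gives `γ ≡ n • δ` modulo `Δ`.

Conversely, `n` points of `(α, β)` cut it into `n + 1` gaps; the smallest one, `x`, has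
`u := n • x < β - α`. Divisibility modulo the convex subgroup generated by `u` gives `δ` with
`α - n • δ` bounded by a multiple of `u`, and a suitable `δ + k • x` then has
`n • (δ + k • x) ∈ (α, α + u] ⊆ (α, β)`.
-/

/-- An ordered abelian group is *regular* if for each positive integer `n`, every open
interval containing at least `n` elements contains an `n`-divisible element. -/
def IsRegularGroup (Γ : Type*) [AddCommGroup Γ] [LinearOrder Γ] [IsOrderedAddMonoid Γ] : Prop :=
  ∀ n : ℕ, 0 < n → ∀ α β : Γ, (∃ s : Finset Γ, s.card = n ∧ ↑s ⊆ Set.Ioo α β) →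
    ∃ δ : Γ, n • δ ∈ Set.Ioo α β

open Set

section

variable {Γ : Type*} [AddCommGroup Γ] [LinearOrder Γ] [IsOrderedAddMonoid Γ]

namespace AddSubgroup

def IsConvex (Δ : AddSubgroup Γ) : Prop :=
  ∀ γ δ : Γ, δ ∈ Δ → 0 ≤ γ → γ ≤ δ → γ ∈ Δ

theorem IsConvex.mem_of_abs_le {Δ : AddSubgroup Γ} (hΔ : Δ.IsConvex) {γ δ : Γ} (hδ : δ ∈ Δ)
    (h : |γ| ≤ δ) : γ ∈ Δ :=
  abs_mem_iff.mp (hΔ _ _ hδ (abs_nonneg γ) h)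

theorem exists_pos_mem_of_ne_bot {Δ : AddSubgroup Γ} (hΔ : Δ ≠ ⊥) : ∃ d ∈ Δ, 0 < d := by
  obtain ⟨d, hd, hd0⟩ := Δ.bot_or_exists_ne_zero.resolve_left hΔ
  exact ⟨|d|, abs_mem_iff.mpr hd, abs_pos.mpr hd0⟩

/-- For `c ≥ 0` this is the convex subgroup generated by `c`. -/
def convexSpan (c : Γ) : AddSubgroup Γ where
  carrier := {γ | ∃ m : ℕ, |γ| ≤ m • c}
  zero_mem' := ⟨0, by simp⟩
  add_mem' := by
    rintro a b ⟨m, hm⟩ ⟨m', hm'⟩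
    exact ⟨m + m', (abs_add_le a b).trans (by rw [add_nsmul]; exact add_le_add hm hm')⟩
  neg_mem' := by
    rintro a ⟨m, hm⟩
    exact ⟨m, by rwa [abs_neg]⟩

theorem convexSpan_isConvex (c : Γ) : (convexSpan c).IsConvex := by
  rintro γ δ ⟨m, hm⟩ hγ hγδ
  exact ⟨m, by rw [abs_of_nonneg hγ]; exact hγδ.trans ((le_abs_self δ).trans hm)⟩

theorem convexSpan_ne_bot {c : Γ} (hc : 0 < c) : convexSpan c ≠ ⊥ := by
  intro h
  have hc_mem : c ∈ convexSpan c := ⟨1, by rw [one_nsmul, abs_of_pos hc]⟩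
  rw [h, mem_bot] at hc_mem
  exact hc.ne' hc_mem

end AddSubgroup

open AddSubgroup

theorem exists_zsmul_mem_Ioc_of_mem_convexSpan {c z : Γ} (hc : 0 < c) (hz : z ∈ convexSpan c) :
    ∃ k : ℤ, k • c ∈ Ioc z (z + c) := by
  obtain ⟨N, hN⟩ := hz
  have hz_le : z ≤ (N : ℤ) • c := natCast_zsmul c N ▸ (le_abs_self z).trans hN
  have hz_ge : (-N : ℤ) • c ≤ z := by
    rw [neg_zsmul, natCast_zsmul]
    exact neg_le.mp ((neg_le_abs z).trans hN)
  obtain ⟨k, hk, hleast⟩ := Int.exists_least_of_bdd (P := fun k : ℤ => z < k • c)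
    ⟨-N, fun k hk => by
      by_contra! h
      exact (hz_ge.trans_lt hk).not_ge (zsmul_le_zsmul_left hc.le h.le)⟩
    ⟨N + 1, by rw [add_zsmul, one_zsmul]; exact hz_le.trans_lt (lt_add_of_pos_right _ hc)⟩
  refine ⟨k, hk, ?_⟩
  by_contra! h
  have := hleast (k - 1) <|
    (lt_sub_iff_add_lt.mpr h).trans_eq (by rw [sub_one_zsmul, sub_eq_add_neg])
  omega

theorem exists_finset_card_eq_subset_Ioo (a : Γ) {d : Γ} (hd : 0 < d) (n : ℕ) :
    ∃ s : Finset Γ, s.card = n ∧ ↑s ⊆ Ioo (a - n • d) (a + n • d) := by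
  refine ⟨(Finset.range n).image (fun k => a + k • d), ?_, ?_⟩
  · rw [Finset.card_image_of_injective _ fun k l hkl =>
      (nsmul_left_strictMono hd).injective (add_left_cancel hkl), Finset.card_range]
  · intro y hy
    simp only [Finset.coe_image, Finset.coe_range, mem_image, mem_Iio] at hy
    obtain ⟨k, hk, rfl⟩ := hy
    exact ⟨(sub_lt_self a (nsmul_pos hd (by omega))).trans_le
        (le_add_of_nonneg_right (nsmul_nonneg hd.le k)),
      add_lt_add_right (nsmul_lt_nsmul_left hd hk) a⟩

theorem exists_pos_card_add_one_nsmul_le_of_subset_Ioo {α β : Γ} (hαβ : α < β) (s : Finset Γ)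
    (hs : ↑s ⊆ Ioo α β) : ∃ x, 0 < x ∧ (s.card + 1) • x ≤ β - α := by
  classical
  induction s using Finset.induction_on_max generalizing β with
  | empty => exact ⟨β - α, sub_pos.mpr hαβ, by simp⟩
  | insert a s ha ih =>
    have haI : a ∈ Ioo α β := hs (by simp)
    obtain ⟨x, hx, hxle⟩ := ih haI.1 fun y hy => ⟨(hs (by simp [hy])).1, ha y hy⟩
    refine ⟨min x (β - a), lt_min hx (sub_pos.mpr haI.2), ?_⟩
    rw [Finset.card_insert_of_notMem fun h => (ha a h).false, succ_nsmul]
    calc (s.card + 1) • min x (β - a) + min x (β - a) ≤ (s.card + 1) • x + (β - a) :=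
          add_le_add (nsmul_le_nsmul_right (min_le_left _ _) _) (min_le_right _ _)
      _ ≤ (a - α) + (β - a) := add_le_add_left hxle _
      _ = β - α := sub_add_sub_cancel' a α β

theorem IsRegularGroup.exists_nsmul_eq {Δ : AddSubgroup Γ} (hΓ : IsRegularGroup Γ) (hΔ : Δ ≠ ⊥)
    (hconv : Δ.IsConvex) (x : Γ ⧸ Δ) {n : ℕ} (hn : 0 < n) : ∃ y : Γ ⧸ Δ, n • y = x := by
  obtain ⟨d, hdΔ, hd⟩ := exists_pos_mem_of_ne_bot hΔ
  obtain ⟨γ, rfl⟩ := QuotientAddGroup.mk_surjective x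
  obtain ⟨δ, hδ₁, hδ₂⟩ := hΓ n hn _ _ (exists_finset_card_eq_subset_Ioo γ hd n)
  refine ⟨δ, ?_⟩
  rw [← QuotientAddGroup.mk_nsmul, QuotientAddGroup.eq_iff_sub_mem]
  exact hconv.mem_of_abs_le (Δ.nsmul_mem hdΔ n)
    (abs_sub_lt_iff.mpr ⟨sub_lt_iff_lt_add'.mpr hδ₂, sub_lt_comm.mp hδ₁⟩).le

theorem IsRegularGroup.of_exists_nsmul_eq
    (h : ∀ c : Γ, 0 < c → ∀ (x : Γ ⧸ convexSpan c) (n : ℕ), 0 < n → ∃ y, n • y = x) :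
    IsRegularGroup Γ := by
  rintro n hn α β ⟨s, rfl, hs⟩
  obtain ⟨a, ha⟩ := Finset.card_pos.mp hn
  obtain ⟨x, hx, hxle⟩ :=
    exists_pos_card_add_one_nsmul_le_of_subset_Ioo ((hs ha).1.trans (hs ha).2) s hs
  set u := s.card • x
  have hu : 0 < u := nsmul_pos hx hn.ne'
  have huβ : α + u < β := by
    rw [succ_nsmul] at hxle
    exact lt_sub_iff_add_lt'.mp ((lt_add_of_pos_right u hx).trans_le hxle)
  obtain ⟨y, hy⟩ := h u hu α s.card hn
  obtain ⟨δ, rfl⟩ := QuotientAddGroup.mk_surjective y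
  rw [← QuotientAddGroup.mk_nsmul, eq_comm, QuotientAddGroup.eq_iff_sub_mem] at hy
  obtain ⟨k, hk₁, hk₂⟩ := exists_zsmul_mem_Ioc_of_mem_convexSpan hu hy
  have hδ : s.card • (δ + k • x) = s.card • δ + k • u := by
    rw [smul_add, smul_comm]
  refine ⟨δ + k • x, ?_, ?_⟩
  · rw [hδ]; exact sub_lt_iff_lt_add'.mp hk₁
  · rw [hδ]
    calc s.card • δ + k • u ≤ s.card • δ + (α - s.card • δ + u) := by gcongr
      _ = α + u := by abel
      _ < β := huβ

end

/-- An ordered abelian group `Γ` is regular if and only if `Γ/Δ` is divisible for every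
nonzero convex subgroup `Δ` of `Γ`. -/
theorem regular_iff_quotients_divisible (Γ : Type*) [AddCommGroup Γ] [LinearOrder Γ] [IsOrderedAddMonoid Γ] :
    IsRegularGroup Γ ↔
      ∀ Δ : AddSubgroup Γ, Δ ≠ ⊥ →
        (∀ γ δ : Γ, δ ∈ Δ → 0 ≤ γ → γ ≤ δ → γ ∈ Δ) →
        ∀ (x : Γ ⧸ Δ) (n : ℕ), 0 < n → ∃ y : Γ ⧸ Δ, n • y = x :=
  ⟨fun hΓ _ hΔ hconv x _ hn => hΓ.exists_nsmul_eq hΔ hconv x hn,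
    fun h => .of_exists_nsmul_eq fun c hc =>
      h _ (AddSubgroup.convexSpan_ne_bot hc) (AddSubgroup.convexSpan_isConvex c)⟩
end

section
/- Let (K, v) be a valued field with value group Γ, let n > 1, and let γ = v(ε) ∈ Γ be a positive element not divisible by n. Set F(x,y) = x^{4n} + ε(xy - ε^2)^n + ε^2 y^{4n}. Then for all nonzero a, b ∈ K the three values v(a^{4n}), v(ε(ab - ε^2)^n), v(ε^2 b^{4n}) are pairwise distinct, and hence v(F(a,b)) = min of these three values. -/
/-!
The three values are `n • v (a ^ 4)`, `γ + n • v (a * b - ε ^ 2)` and `γ + (γ + n • v (b ^ 4))`,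
so equality of the first two or of the last two would make `γ` divisible by `n` in `Γ` (the
middle value may be `⊤`, but `v (a ^ 4)` and `v (b ^ 4)` are finite). The first and last values are also
`2 • n • v (a ^ 2)` and `2 • (γ + n • v (b ^ 2))`; since `Γ` is torsion-free the factor `2`
cancels and the same argument applies. Three pairwise distinct valuations of summands make the
valuation of the sum their minimum.
-/

namespace WithTop

variable {Γ : Type*} [AddMonoid Γ]

theorem nsmul_top {n : ℕ} (hn : n ≠ 0) : n • (⊤ : WithTop Γ) = ⊤ := by
  obtain ⟨m, rfl⟩ := Nat.exists_eq_succ_of_ne_zero hn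
  rw [succ_nsmul, add_top]

instance [IsAddTorsionFree Γ] : IsAddTorsionFree (WithTop Γ) where
  nsmul_right_injective k hk x y h := by
    induction x <;> induction y <;>
      simp_all [nsmul_top hk, ← coe_nsmul, (nsmul_right_injective hk).eq_iff]

end WithTop

section NotDivisible

variable {Γ : Type*} [AddCommGroup Γ] {n : ℕ} {γ : Γ}

theorem nsmul_ne_add_nsmul (hnd : ¬∃ δ : Γ, n • δ = γ) (x y : Γ) : n • x ≠ γ + n • y :=
  fun h ↦ hnd ⟨x - y, by rw [smul_sub, h]; abel⟩

theorem WithTop.eq_top_of_nsmul_eq_coe_add_nsmul (hnd : ¬∃ δ : Γ, n • δ = γ)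
    {x y : WithTop Γ} (h : n • x = γ + n • y) : x = ⊤ ∧ y = ⊤ := by
  rcases eq_or_ne n 0 with rfl | hn
  · exact absurd ⟨0, by simpa [eq_comm] using h⟩ hnd
  induction x with
  | top =>
    induction y with
    | top => exact ⟨rfl, rfl⟩
    | coe y =>
      rw [nsmul_top hn, ← coe_nsmul, ← coe_add] at h
      exact absurd h top_ne_coe
  | coe x =>
    induction y with
    | top =>
      rw [nsmul_top hn, add_top, ← coe_nsmul] at h
      exact absurd h coe_ne_top
    | coe y => exact absurd (by exact_mod_cast h) (nsmul_ne_add_nsmul hnd x y)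

end NotDivisible

theorem AddValuation.map_add_add_of_pairwise_ne {R Γ₀ : Type*} [Ring R]
    [LinearOrderedAddCommMonoidWithTop Γ₀] (v : AddValuation R Γ₀) {x y z : R}
    (hxy : v x ≠ v y) (hxz : v x ≠ v z) (hyz : v y ≠ v z) :
    v (x + y + z) = min (v x) (min (v y) (v z)) := by
  have hxy_z : v (x + y) ≠ v z := by
    rw [v.map_add_of_distinct_val hxy]
    rcases min_choice (v x) (v y) with h | h <;> rw [h] <;> assumption
  rw [v.map_add_of_distinct_val hxy_z, v.map_add_of_distinct_val hxy, min_assoc]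

theorem three_distinct_values_general {K Γ : Type*} [Field K] [AddCommGroup Γ] [LinearOrder Γ] [IsOrderedAddMonoid Γ]
    (v : AddValuation K (WithTop Γ)) (n : ℕ)
    (ε : K) (γ : Γ) (hε : v ε = (γ : WithTop Γ))
    (hnd : ¬∃ δ : Γ, n • δ = γ)
    (a b : K) (ha : a ≠ 0) (hb : b ≠ 0) :
    (v (a ^ (4 * n)) ≠ v (ε * (a * b - ε ^ 2) ^ n) ∧
     v (a ^ (4 * n)) ≠ v (ε ^ 2 * b ^ (4 * n)) ∧
     v (ε * (a * b - ε ^ 2) ^ n) ≠ v (ε ^ 2 * b ^ (4 * n))) ∧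
    v (a ^ (4 * n) + ε * (a * b - ε ^ 2) ^ n + ε ^ 2 * b ^ (4 * n)) =
      min (v (a ^ (4 * n)))
        (min (v (ε * (a * b - ε ^ 2) ^ n)) (v (ε ^ 2 * b ^ (4 * n)))) := by
  have hA₄ : v (a ^ (4 * n)) = n • v (a ^ 4) := by rw [pow_mul, v.map_pow]
  have hA₂ : v (a ^ (4 * n)) = 2 • n • v (a ^ 2) := by
    rw [show a ^ (4 * n) = ((a ^ 2) ^ n) ^ 2 by ring, v.map_pow, v.map_pow]
  have hB : v (ε * (a * b - ε ^ 2) ^ n) = γ + n • v (a * b - ε ^ 2) := by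
    rw [v.map_mul, v.map_pow, hε]
  have hC₂ : v (ε ^ 2 * b ^ (4 * n)) = 2 • (γ + n • v (b ^ 2)) := by
    rw [show ε ^ 2 * b ^ (4 * n) = (ε * (b ^ 2) ^ n) ^ 2 by ring, v.map_pow, v.map_mul,
      v.map_pow, hε]
  have hC₄ : v (ε ^ 2 * b ^ (4 * n)) = γ + (γ + n • v (b ^ 4)) := by
    rw [show ε ^ 2 * b ^ (4 * n) = ε * (ε * (b ^ 4) ^ n) by ring, v.map_mul, v.map_mul,
      v.map_pow, hε]
  have h12 : v (a ^ (4 * n)) ≠ v (ε * (a * b - ε ^ 2) ^ n) := by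
    rw [hA₄, hB]
    exact fun h ↦ v.ne_top_iff.mpr (pow_ne_zero 4 ha)
      (WithTop.eq_top_of_nsmul_eq_coe_add_nsmul hnd h).1
  have h13 : v (a ^ (4 * n)) ≠ v (ε ^ 2 * b ^ (4 * n)) := by
    rw [hA₂, hC₂]
    exact fun h ↦ v.ne_top_iff.mpr (pow_ne_zero 2 ha)
      (WithTop.eq_top_of_nsmul_eq_coe_add_nsmul hnd (nsmul_right_injective two_ne_zero h)).1
  have h23 : v (ε * (a * b - ε ^ 2) ^ n) ≠ v (ε ^ 2 * b ^ (4 * n)) := by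
    rw [hB, hC₄]
    exact fun h ↦ v.ne_top_iff.mpr (pow_ne_zero 4 hb)
      (WithTop.eq_top_of_nsmul_eq_coe_add_nsmul hnd (WithTop.add_left_cancel WithTop.coe_ne_top h)).2
  exact ⟨⟨h12, h13, h23⟩, v.map_add_add_of_pairwise_ne h12 h13 h23⟩

/-- Let `(K,v)` be a valued field with value group `Γ`, `n > 1`, and `γ = v ε` a positive
element of `Γ` not divisible by `n`.  For `F(x,y) = x^{4n} + ε(xy - ε²)ⁿ + ε²y^{4n}` and
nonzero `a b : K`, the three values `v(a^{4n})`, `v(ε(ab - ε²)ⁿ)`, `v(ε²b^{4n})` are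
pairwise distinct, and `v (F a b)` equals their minimum. -/
theorem three_distinct_values {K Γ : Type*} [Field K] [AddCommGroup Γ] [LinearOrder Γ] [IsOrderedAddMonoid Γ]
    (v : AddValuation K (WithTop Γ)) (n : ℕ) (hn : 1 < n)
    (ε : K) (γ : Γ) (hε : v ε = (γ : WithTop Γ)) (hγ : 0 < γ)
    (hnd : ¬∃ δ : Γ, n • δ = γ)
    (a b : K) (ha : a ≠ 0) (hb : b ≠ 0) :
    (v (a ^ (4 * n)) ≠ v (ε * (a * b - ε ^ 2) ^ n) ∧
     v (a ^ (4 * n)) ≠ v (ε ^ 2 * b ^ (4 * n)) ∧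
     v (ε * (a * b - ε ^ 2) ^ n) ≠ v (ε ^ 2 * b ^ (4 * n))) ∧
    v (a ^ (4 * n) + ε * (a * b - ε ^ 2) ^ n + ε ^ 2 * b ^ (4 * n)) =
      min (v (a ^ (4 * n)))
        (min (v (ε * (a * b - ε ^ 2) ^ n)) (v (ε ^ 2 * b ^ (4 * n)))) :=
  three_distinct_values_general v n ε γ hε hnd a b ha hb
end

section
/- Let (K, v) be a valued field with value group Γ, let n > 1, ε ∈ K with γ = v(ε) > 0 not n-divisible in Γ, and F(x,y) = x^{4n} + ε(xy-ε^2)^n + ε^2 y^{4n}. Then for all a, b in the valuation ring O_v, v(F(a,b)) < 4nγ + γ. -/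
/-! The three terms of `F a b` have values `4n • v a`, `γ + n • v (ab - ε²)` and `2γ + 4n • v b`,
which lie in the classes of `0`, `γ`, `2γ` modulo `n` (the first and last even modulo `2n`), so
two of them can only agree at `⊤` and `v (F a b)` is their minimum. If all three were at least
`B = 4nγ + γ`, the middle one would force `v (ab - ε²) ≥ 4γ > v (ε²)`, hence `v a + v b = 2γ`;
then the outer two values add up to `2B`, so `4n • v a = B`, making `γ` divisible by `n`. -/

namespace AddValuation

variable {R Γ₀ : Type*} [Ring R] [LinearOrderedAddCommMonoidWithTop Γ₀] (v : AddValuation R Γ₀)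

theorem map_add_of_eq_imp_eq_top {x y : R} (h : v x = v y → v x = ⊤) :
    v (x + y) = min (v x) (v y) := by
  by_cases hxy : v x = v y
  · have hle := v.map_add x y
    rw [← hxy, min_self, h hxy, top_le_iff] at hle
    rw [← hxy, min_self, h hxy, hle]
  · exact v.map_add_of_distinct_val hxy

theorem map_add_add_of_eq_imp_eq_top {x y z : R} (hxy : v x = v y → v x = ⊤)
    (hxz : v x = v z → v x = ⊤) (hyz : v y = v z → v y = ⊤) :
    v (x + y + z) = min (min (v x) (v y)) (v z) := by
  have hsum := v.map_add_of_eq_imp_eq_top hxy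
  suffices h : min (v x) (v y) = v z → min (v x) (v y) = ⊤ by
    rw [v.map_add_of_eq_imp_eq_top (hsum ▸ h), hsum]
  rcases min_choice (v x) (v y) with hm | hm <;> rw [hm]
  exacts [hxz, hyz]

end AddValuation

theorem not_exists_mul_nsmul_eq_nsmul {M : Type*} [AddMonoid M] [IsAddTorsionFree M] {m n : ℕ}
    {γ : M} (hm : m ≠ 0) (h : ¬∃ δ : M, n • δ = γ) : ¬∃ δ : M, (m * n) • δ = m • γ :=
  fun ⟨δ, hδ⟩ => h ⟨δ, nsmul_right_injective hm (by simpa only [mul_nsmul'] using hδ)⟩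

namespace WithTop

theorem nsmul_top_s7 {α : Type*} [AddMonoid α] {k : ℕ} (hk : k ≠ 0) : k • (⊤ : WithTop α) = ⊤ := by
  obtain ⟨j, rfl⟩ := Nat.exists_eq_succ_of_ne_zero hk
  rw [succ_nsmul, add_top]

theorem nsmul_eq_top_of_nsmul_eq_coe_add_nsmul {Γ : Type*} [AddCommGroup Γ] {k : ℕ} {c : Γ}
    (hk : k ≠ 0) (hc : ¬∃ δ : Γ, k • δ = c) {x y : WithTop Γ} (h : k • x = c + k • y) :
    k • x = ⊤ := by
  induction x using WithTop.recTopCoe with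
  | top => exact nsmul_top_s7 hk
  | coe α =>
    induction y using WithTop.recTopCoe with
    | top => rwa [nsmul_top_s7 hk, add_top] at h
    | coe β =>
      norm_cast at h
      exact (hc ⟨α - β, by rw [nsmul_sub, h, add_sub_cancel_right]⟩).elim

end WithTop

section

variable {Γ : Type*} [AddCommGroup Γ] {n : ℕ} {γ : Γ}

open WithTop

theorem four_mul_nsmul_eq_top_of_eq_coe_add_nsmul (hn : n ≠ 0) (hnd : ¬∃ δ : Γ, n • δ = γ)
    {p r : WithTop Γ} (h : (4 * n) • p = γ + n • r) : (4 * n) • p = ⊤ := by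
  rw [mul_nsmul] at h ⊢
  exact nsmul_eq_top_of_nsmul_eq_coe_add_nsmul hn hnd h

theorem four_mul_nsmul_eq_top_of_eq_coe_two_nsmul_add [IsAddTorsionFree Γ] (hn : n ≠ 0)
    (hnd : ¬∃ δ : Γ, n • δ = γ) {p q : WithTop Γ} (h : (4 * n) • p = ↑(2 • γ) + (4 * n) • q) :
    (4 * n) • p = ⊤ := by
  simp only [show 4 * n = 2 * (2 * n) by ring, mul_nsmul p, mul_nsmul q] at h ⊢
  exact nsmul_eq_top_of_nsmul_eq_coe_add_nsmul (by positivity)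
    (not_exists_mul_nsmul_eq_nsmul two_ne_zero hnd) h

theorem coe_add_nsmul_eq_top_of_eq_coe_two_nsmul_add (hn : n ≠ 0) (hnd : ¬∃ δ : Γ, n • δ = γ)
    {q r : WithTop Γ} (h : ↑γ + n • r = ↑(2 • γ) + (4 * n) • q) : ↑γ + n • r = ⊤ := by
  rw [two_nsmul, coe_add, add_assoc, mul_nsmul] at h
  rw [nsmul_eq_top_of_nsmul_eq_coe_add_nsmul hn hnd (WithTop.add_left_cancel coe_ne_top h),
    WithTop.add_top]

theorem min_nsmul_lt_of_add_eq [LinearOrder Γ] [IsOrderedAddMonoid Γ] (hnd : ¬∃ δ : Γ, n • δ = γ)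
    {α β : Γ} (h : α + β = 2 • γ) :
    min ((4 * n) • α) (2 • γ + (4 * n) • β) < (4 * n) • γ + γ := by
  by_contra! hle
  obtain ⟨h1, h3⟩ := le_min_iff.1 hle
  obtain ⟨heq, -⟩ := (add_eq_add_iff_eq_and_eq h1 h3).1
    (by linear_combination (norm := module) (-(4 * n : ℤ)) • h)
  exact hnd ⟨4 • α - 4 • γ, by linear_combination (norm := module) -heq⟩

theorem min_min_nsmul_lt [LinearOrder Γ] [IsOrderedAddMonoid Γ] (hn : n ≠ 0) (hγ : 0 < γ)
    (hnd : ¬∃ δ : Γ, n • δ = γ) {p q r : WithTop Γ}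
    (hpq : ((2 • γ : Γ) : WithTop Γ) < r → p + q = ↑(2 • γ)) :
    min (min ((4 * n) • p) (↑γ + n • r)) (↑(2 • γ) + (4 * n) • q) < ↑((4 * n) • γ + γ) := by
  by_contra! hle
  obtain ⟨⟨h1, h2⟩, h3⟩ := by simpa only [le_min_iff] using hle
  have hr : ((2 • γ : Γ) : WithTop Γ) < r := by
    induction r using WithTop.recTopCoe with
    | top => exact coe_lt_top _
    | coe ρ =>
      norm_cast at h2 ⊢
      have h4 : n • (4 • γ) ≤ n • ρ := by
        rw [← mul_nsmul]
        simpa only [add_comm γ, add_le_add_iff_right] using h2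
      calc 2 • γ < 4 • γ := nsmul_lt_nsmul_left hγ (by norm_num)
        _ ≤ ρ := (nsmul_le_nsmul_iff_right hn).1 h4
  have hpq := hpq hr
  obtain ⟨hp, hq⟩ := WithTop.add_ne_top.1 (hpq.trans_ne coe_ne_top)
  lift p to Γ using hp
  lift q to Γ using hq
  norm_cast at h1 h3 hpq
  exact (min_nsmul_lt_of_add_eq hnd hpq).not_ge (le_min h1 h3)

end

theorem value_bounded_general {K Γ : Type*} [Field K] [AddCommGroup Γ] [LinearOrder Γ] [IsOrderedAddMonoid Γ]
    (v : AddValuation K (WithTop Γ)) (n : ℕ) (hn : 1 < n)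
    (ε : K) (γ : Γ) (hε : v ε = (γ : WithTop Γ)) (hγ : 0 < γ)
    (hnd : ¬∃ δ : Γ, n • δ = γ)
    (a b : K) :
    v (a ^ (4 * n) + ε * (a * b - ε ^ 2) ^ n + ε ^ 2 * b ^ (4 * n)) <
      (((4 * n) • γ + γ : Γ) : WithTop Γ) := by
  have hn0 : n ≠ 0 := by omega
  have hε2 : v (ε ^ 2) = ↑(2 • γ) := by rw [v.map_pow, hε, WithTop.coe_nsmul]
  have hv₁ : v (a ^ (4 * n)) = (4 * n) • v a := v.map_pow a _
  have hv₂ : v (ε * (a * b - ε ^ 2) ^ n) = ↑γ + n • v (a * b - ε ^ 2) := by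
    rw [v.map_mul, v.map_pow, hε]
  have hv₃ : v (ε ^ 2 * b ^ (4 * n)) = ↑(2 • γ) + (4 * n) • v b := by
    rw [v.map_mul, v.map_pow b, hε2]
  rw [v.map_add_add_of_eq_imp_eq_top, hv₁, hv₂, hv₃]
  · refine min_min_nsmul_lt hn0 hγ hnd fun h => ?_
    rw [← v.map_mul, ← hε2]
    exact v.map_eq_of_lt_sub (hε2 ▸ h)
  · rw [hv₁, hv₂]; exact four_mul_nsmul_eq_top_of_eq_coe_add_nsmul hn0 hnd
  · rw [hv₁, hv₃]; exact four_mul_nsmul_eq_top_of_eq_coe_two_nsmul_add hn0 hnd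
  · rw [hv₂, hv₃]; exact coe_add_nsmul_eq_top_of_eq_coe_two_nsmul_add hn0 hnd

/-- Let `(K,v)` be a valued field with value group `Γ`, `n > 1`, and `γ = v ε` a positive
element of `Γ` not divisible by `n`.  For `F(x,y) = x^{4n} + ε(xy - ε²)ⁿ + ε²y^{4n}` and
all `a b` in the valuation ring, `v (F a b) < 4nγ + γ`. -/
theorem value_bounded {K Γ : Type*} [Field K] [AddCommGroup Γ] [LinearOrder Γ] [IsOrderedAddMonoid Γ]
    (v : AddValuation K (WithTop Γ)) (n : ℕ) (hn : 1 < n)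
    (ε : K) (γ : Γ) (hε : v ε = (γ : WithTop Γ)) (hγ : 0 < γ)
    (hnd : ¬∃ δ : Γ, n • δ = γ)
    (a b : K) (ha : 0 ≤ v a) (hb : 0 ≤ v b) :
    v (a ^ (4 * n) + ε * (a * b - ε ^ 2) ^ n + ε ^ 2 * b ^ (4 * n)) <
      (((4 * n) • γ + γ : Γ) : WithTop Γ) :=
  value_bounded_general v n hn ε γ hε hγ hnd a b
end

section
/- Let (K, Γ, k; v) be a valued field whose value group Γ is dense and regular but not divisible. Then K is not extremal: there exists a polynomial F(x,y) over K such that the set {v(F(a,b)) : a, b ∈ O_v} has no maximal element. -/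
open MvPolynomial

theorem exists_nsmul_eq_of_exists_mul_nsmul_eq_nsmul {M : Type*} [AddMonoid M]
    [IsAddTorsionFree M] {m n : ℕ} {γ : M} (hm : m ≠ 0) (h : ∃ δ : M, (m * n) • δ = m • γ) :
    ∃ δ : M, n • δ = γ := by
  obtain ⟨δ, hδ⟩ := h
  exact ⟨δ, nsmul_right_injective hm (by simpa only [mul_nsmul'] using hδ)⟩

theorem exists_nsmul_eq_abs_iff {G : Type*} [AddGroup G] [LinearOrder G] {n : ℕ} {γ : G} :
    (∃ δ : G, n • δ = |γ|) ↔ ∃ δ : G, n • δ = γ := by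
  rcases abs_choice γ with h | h
  · rw [h]
  · rw [h]
    constructor <;> rintro ⟨δ, hδ⟩ <;> exact ⟨-δ, by simp [hδ]⟩

theorem IsRegularGroup.exists_nsmul_mem_Ioo {Γ : Type*} [AddCommGroup Γ] [LinearOrder Γ]
    [IsOrderedAddMonoid Γ] [DenselyOrdered Γ] (h : IsRegularGroup Γ) {n : ℕ}
    (hn : 0 < n) {α β : Γ} (hαβ : α < β) : ∃ δ : Γ, n • δ ∈ Set.Ioo α β := by
  obtain ⟨s, hs, hcard⟩ := (Set.Ioo_infinite hαβ).exists_subset_card_eq n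
  exact h n hn α β ⟨s, hcard, hs⟩

noncomputable def nonextremalWitness {K : Type*} [Field K] (ε : K) (n : ℕ) :
    MvPolynomial (Fin 2) K :=
  X 0 ^ (4 * n) + C ε * (X 0 * X 1 - C (ε ^ 2)) ^ n + C (ε ^ 2) * X 1 ^ (4 * n)

@[simp]
theorem eval_nonextremalWitness {K : Type*} [Field K] (ε a b : K) (n : ℕ) :
    eval ![a, b] (nonextremalWitness ε n) =
      a ^ (4 * n) + ε * (a * b - ε ^ 2) ^ n + ε ^ 2 * b ^ (4 * n) := by
  simp [nonextremalWitness]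

namespace AddValuation

section Ring

variable {R Γ₀ : Type*} [Ring R] [LinearOrderedAddCommMonoidWithTop Γ₀] (v : AddValuation R Γ₀)

theorem le_of_le_map_add {x y : R} {c : Γ₀} (h : c ≤ v (x + y)) (hxy : v x = v y → c ≤ v x) :
    c ≤ v x ∧ c ≤ v y := by
  by_cases hxy' : v x = v y
  · exact ⟨hxy hxy', hxy' ▸ hxy hxy'⟩
  · rwa [v.map_add_of_distinct_val hxy', le_min_iff] at h

theorem le_of_le_map_add_add {x y z : R} {c : Γ₀} (h : c ≤ v (x + y + z))
    (hxy : v x = v y → c ≤ v x) (hxz : v x = v z → c ≤ v x) (hyz : v y = v z → c ≤ v y) :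
    c ≤ v x ∧ c ≤ v y ∧ c ≤ v z := by
  have hsum : v (x + y) = v z → c ≤ v (x + y) := by
    intro heq
    by_contra! hlt
    by_cases hxy' : v x = v y
    · exact hlt.not_ge ((le_min (hxy hxy') (hxy' ▸ hxy hxy')).trans (v.map_add x y))
    · rw [v.map_add_of_distinct_val hxy'] at heq hlt
      rcases min_choice (v x) (v y) with hmin | hmin <;> rw [hmin] at heq hlt
      · exact hlt.not_ge (hxz heq)
      · exact hlt.not_ge (hyz heq)
  obtain ⟨hsum_le, hz⟩ := v.le_of_le_map_add h hsum
  obtain ⟨hx, hy⟩ := v.le_of_le_map_add hsum_le hxy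
  exact ⟨hx, hy, hz⟩

end Ring

section Field

variable {K Γ : Type*} [Field K] [AddCommGroup Γ] [LinearOrder Γ] [IsOrderedAddMonoid Γ]
  (v : AddValuation K (WithTop Γ))

theorem map_mul_pow_eq_top_of_map_eq {u w x y : K} {c d : Γ} {n : ℕ} (hn : n ≠ 0)
    (hu : v u = c) (hw : v w = d) (hcd : ¬∃ δ : Γ, n • δ = d - c)
    (h : v (u * x ^ n) = v (w * y ^ n)) : v (u * x ^ n) = ⊤ := by
  rcases eq_or_ne x 0 with rfl | hx
  · simp [zero_pow hn]
  rcases eq_or_ne y 0 with rfl | hy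
  · simpa [zero_pow hn] using h
  obtain ⟨α, hα⟩ := WithTop.ne_top_iff_exists.mp (v.ne_top_iff.mpr hx)
  obtain ⟨β, hβ⟩ := WithTop.ne_top_iff_exists.mp (v.ne_top_iff.mpr hy)
  rw [v.map_mul, v.map_mul, v.map_pow, v.map_pow, hu, hw, ← hα, ← hβ] at h
  have h' : c + n • α = d + n • β := by exact_mod_cast h
  exact absurd ⟨α - β, by rw [smul_sub, sub_eq_sub_iff_add_eq_add, add_comm, h', add_comm]⟩ hcd

theorem le_map_terms_of_le_map_eval_nonextremalWitness {ε : K} {γ : Γ} {n : ℕ} (hn : n ≠ 0)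
    (hndiv : ¬∃ δ : Γ, n • δ = γ) (hε : v ε = γ) {a b : K} {t : WithTop Γ}
    (ht : t ≤ v (eval ![a, b] (nonextremalWitness ε n))) :
    t ≤ v (a ^ (4 * n)) ∧ t ≤ v (ε * (a * b - ε ^ 2) ^ n) ∧ t ≤ v (ε ^ 2 * b ^ (4 * n)) := by
  rw [eval_nonextremalWitness] at ht
  have h1 : v 1 = (0 : Γ) := v.map_one
  have hε2 : v (ε ^ 2) = (2 • γ : Γ) := by rw [v.map_pow, hε, WithTop.coe_nsmul]
  refine v.le_of_le_map_add_add ht ?_ ?_ ?_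
  · rw [show a ^ (4 * n) = 1 * (a ^ 4) ^ n by ring]
    have hndiv' : ¬∃ δ : Γ, n • δ = γ - 0 := by rwa [sub_zero]
    exact fun h => (v.map_mul_pow_eq_top_of_map_eq hn h1 hε hndiv' h).symm ▸ le_top
  · rw [show a ^ (4 * n) = 1 * (a ^ 2) ^ (2 * n) by ring,
      show ε ^ 2 * b ^ (4 * n) = ε ^ 2 * (b ^ 2) ^ (2 * n) by ring]
    have hndiv' : ¬∃ δ : Γ, (2 * n) • δ = 2 • γ - 0 := by
      rw [sub_zero]
      exact fun h => hndiv (exists_nsmul_eq_of_exists_mul_nsmul_eq_nsmul two_ne_zero h)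
    exact fun h => (v.map_mul_pow_eq_top_of_map_eq (by omega) h1 hε2 hndiv' h).symm ▸ le_top
  · rw [show ε ^ 2 * b ^ (4 * n) = ε ^ 2 * (b ^ 4) ^ n by ring]
    have hndiv' : ¬∃ δ : Γ, n • δ = 2 • γ - γ := by rwa [two_nsmul, add_sub_cancel_right]
    exact fun h => (v.map_mul_pow_eq_top_of_map_eq hn hε hε2 hndiv' h).symm ▸ le_top

theorem map_eval_nonextremalWitness_lt {ε : K} {γ : Γ} {n : ℕ} (hn : n ≠ 0) (hγ : 0 < γ)
    (hndiv : ¬∃ δ : Γ, n • δ = γ) (hε : v ε = γ) (a b : K) :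
    v (eval ![a, b] (nonextremalWitness ε n)) < ((4 * n + 1) • γ : Γ) := by
  by_contra! hle
  obtain ⟨hP, hQ, hR⟩ := v.le_map_terms_of_le_map_eval_nonextremalWitness hn hndiv hε hle
  have hε2 : v (ε ^ 2) = (2 • γ : Γ) := by rw [v.map_pow, hε, WithTop.coe_nsmul]
  -- `(4n+1)γ = v (ε * (ε ^ 4) ^ n)` lies in `γ + nΓ`, which `v (a ^ (4n)) ∈ 4nΓ ∪ {⊤}` avoids.
  have hP' : ((4 * n + 1) • γ : Γ) < v (a ^ (4 * n)) := by
    have hs : v (ε * (ε ^ 4) ^ n) = ((4 * n + 1) • γ : Γ) := by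
      rw [v.map_mul, v.map_pow, v.map_pow, hε, ← WithTop.coe_nsmul, ← WithTop.coe_nsmul,
        ← WithTop.coe_add]
      congr 1
      module
    have hndiv' : ¬∃ δ : Γ, n • δ = γ - 0 := by rwa [sub_zero]
    refine hP.lt_of_ne fun h => ?_
    rw [← hs, show a ^ (4 * n) = 1 * (a ^ 4) ^ n by ring] at h
    exact WithTop.coe_ne_top (hs.symm.trans
      (h.trans (v.map_mul_pow_eq_top_of_map_eq hn v.map_one hε hndiv' h.symm)))
  have hab : v (ε ^ 2) < v (a * b) := by
    have hsum := WithTop.add_lt_add_of_lt_of_le WithTop.coe_ne_top hP' hR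
    rw [← v.map_mul, show a ^ (4 * n) * (ε ^ 2 * b ^ (4 * n)) = ε ^ 2 * (a * b) ^ (4 * n) by ring,
      v.map_mul, hε2, v.map_pow, ← WithTop.coe_add,
      show (4 * n + 1) • γ + (4 * n + 1) • γ = 2 • γ + (4 * n) • (2 • γ) by module,
      WithTop.coe_add, WithTop.coe_nsmul] at hsum
    rw [hε2]
    exact lt_of_nsmul_lt_nsmul_right _ (lt_of_add_lt_add_left hsum)
  have hQ' : v (ε * (a * b - ε ^ 2) ^ n) = ((2 * n + 1) • γ : Γ) := by
    rw [v.map_mul, v.map_pow, v.map_sub_eq_of_lt_right hab, hε, hε2, ← WithTop.coe_nsmul,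
      ← WithTop.coe_add]
    congr 1
    module
  rw [hQ'] at hQ
  exact (WithTop.coe_le_coe.mp hQ).not_gt ((nsmul_lt_nsmul_iff_left hγ).mpr (by omega))

theorem exists_lt_map_eval_nonextremalWitness [DenselyOrdered Γ]
    (hsurj : ∀ γ : Γ, ∃ x : K, v x = (γ : WithTop Γ)) (hreg : IsRegularGroup Γ) {ε : K} {γ : Γ}
    {n : ℕ} (hn : n ≠ 0) (hγ : 0 < γ) (hε : v ε = γ) {g : WithTop Γ}
    (hg : g < ((4 * n + 1) • γ : Γ)) :
    ∃ c d : K, 0 ≤ v c ∧ 0 ≤ v d ∧ g < v (eval ![c, d] (nonextremalWitness ε n)) := by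
  lift g to Γ using hg.ne_top
  set s : Γ := (4 * n + 1) • γ
  -- The floor `4nγ` keeps `γ < δ < 2γ`, so that `c` and `ε ^ 2 / c` are integral.
  set α : Γ := max g ((4 * n) • γ)
  have hαs : α < s :=
    max_lt (WithTop.coe_lt_coe.mp hg) ((nsmul_lt_nsmul_iff_left hγ).mpr (by omega))
  obtain ⟨δ, hαδ, hδs⟩ := hreg.exists_nsmul_mem_Ioo (by omega : 0 < 4 * n)
    (show α < 2 • s - α by rw [two_nsmul, lt_sub_iff_add_lt]; exact add_lt_add hαs hαs)
  have hγδ : γ < δ := lt_of_nsmul_lt_nsmul_right _ ((le_max_right _ _).trans_lt hαδ)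
  have hδγ : δ < 2 • γ := by
    refine lt_of_nsmul_lt_nsmul_right (4 * n) (hδs.trans_le ?_)
    calc 2 • s - α ≤ 2 • s - (4 * n) • γ := sub_le_sub_left (le_max_right _ _) _
      _ = (4 * n + 2) • γ := by simp only [s]; module
      _ ≤ (8 * n) • γ := nsmul_le_nsmul_left hγ.le (by omega)
      _ = (4 * n) • (2 • γ) := by module
  obtain ⟨c, hc⟩ := hsurj δ
  have hc0 : c ≠ 0 := v.ne_top_iff.mp (hc ▸ WithTop.coe_ne_top)
  have hd : v (ε ^ 2 / c) = (2 • γ - δ : Γ) := by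
    rw [v.map_div, v.map_pow, hε, hc, WithTop.LinearOrderedAddCommGroup.coe_sub,
      WithTop.coe_nsmul]
  refine ⟨c, ε ^ 2 / c, hc ▸ WithTop.coe_nonneg.mpr (hγ.trans hγδ).le,
    hd ▸ WithTop.coe_nonneg.mpr (sub_nonneg.mpr hδγ.le), ?_⟩
  rw [eval_nonextremalWitness, mul_div_cancel₀ _ hc0, sub_self, zero_pow hn, mul_zero]
  refine v.map_lt_add (v.map_lt_add ?_ (by simp)) ?_
  · rw [v.map_pow, hc, ← WithTop.coe_nsmul, WithTop.coe_lt_coe]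
    exact (le_max_left _ _).trans_lt hαδ
  · rw [v.map_mul, v.map_pow, v.map_pow, hε, hd, ← WithTop.coe_nsmul, ← WithTop.coe_nsmul,
      ← WithTop.coe_add, WithTop.coe_lt_coe]
    calc g ≤ α := le_max_left _ _
      _ < 2 • s - (4 * n) • δ := lt_sub_comm.mp hδs
      _ = 2 • γ + (4 * n) • (2 • γ - δ) := by simp only [s]; module

end Field

end AddValuation

/-- A valued field whose value group is dense and regular but not divisible is not
extremal: some polynomial in two variables has no maximal value on the valuation ring. -/
theorem not_extremal_of_dense_regular_not_divisible {K Γ : Type*} [Field K]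
    [AddCommGroup Γ] [LinearOrder Γ] [IsOrderedAddMonoid Γ] (v : AddValuation K (WithTop Γ))
    (hsurj : ∀ γ : Γ, ∃ x : K, v x = (γ : WithTop Γ))
    (hreg : IsRegularGroup Γ) (hdense : DenselyOrdered Γ)
    (hndiv : ∃ (γ : Γ) (n : ℕ), 0 < n ∧ ¬∃ δ : Γ, n • δ = γ) :
    ∃ F : MvPolynomial (Fin 2) K,
      ¬∃ a b : K, 0 ≤ v a ∧ 0 ≤ v b ∧
        ∀ c d : K, 0 ≤ v c → 0 ≤ v d →
          v (MvPolynomial.eval ![c, d] F) ≤ v (MvPolynomial.eval ![a, b] F) := by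
  obtain ⟨γ, n, hn, hndiv⟩ := hndiv
  have hγ : 0 < |γ| := abs_pos.mpr fun h => hndiv ⟨0, by rw [smul_zero, h]⟩
  obtain ⟨ε, hε⟩ := hsurj |γ|
  refine ⟨nonextremalWitness ε n, fun ⟨a, b, _, _, hmax⟩ => ?_⟩
  have hlt := v.map_eval_nonextremalWitness_lt hn.ne' hγ
    (exists_nsmul_eq_abs_iff.not.mpr hndiv) hε a b
  obtain ⟨c, d, hc, hd, hgt⟩ :=
    v.exists_lt_map_eval_nonextremalWitness hsurj hreg hn.ne' hγ hε hlt
  exact (hmax c d hc hd).not_gt hgt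
end

section
/- Let (K, Γ, k; v) be an extremal valued field. Then for every nonzero convex subgroup Δ of Γ, the quotient group Γ/Δ is divisible. -/
/-!
Suppose `γ > 0` is not divisible by `n` modulo `Δ`; pick `g` with `v g = γ` and `0 < δ ∈ Δ`.
On the valuation ring, the values of `F = g^(n+1) X^n + (X^n Y - g)^n` are bounded by the
values `v (g^(n+1) x^n)` with `v (x^n) < γ`: its two terms never have the same value, as
`γ ∉ n Γ`, and when `v (x^n) > γ` the second term dominates with value `n γ`. Each of these
bounds is attained, at `Y = g / x^n`. By convexity, `γ - n v(x) ∉ Δ` exceeds `n δ`, so `v x`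
can always be increased by `δ`, and `F` has no maximal value.
-/

def IsExtremal {K Γ : Type*} [Field K] [AddCommGroup Γ] [LinearOrder Γ] [IsOrderedAddMonoid Γ]
    (v : AddValuation K (WithTop Γ)) : Prop :=
  ∀ (n : ℕ) (F : MvPolynomial (Fin n) K), ∃ a : Fin n → K,
    (∀ i, 0 ≤ v (a i)) ∧ ∀ b : Fin n → K, (∀ i, 0 ≤ v (b i)) →
      v (MvPolynomial.eval b F) ≤ v (MvPolynomial.eval a F)

section OrderedGroup

variable {Γ : Type*} [AddCommGroup Γ] [LinearOrder Γ] [IsOrderedAddMonoid Γ] {Δ : AddSubgroup Γ}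

theorem AddSubgroup.exists_pos_mem_of_ne_bot_s9 (hΔ : Δ ≠ ⊥) : ∃ δ ∈ Δ, 0 < δ := by
  obtain ⟨⟨d, hd⟩, hd0⟩ := AddSubgroup.ne_bot_iff_exists_ne_zero.1 hΔ
  exact ⟨|d|, abs_mem_iff.2 hd, abs_pos.2 (by simpa using hd0)⟩

theorem nsmul_add_lt_of_convex (hconv : ∀ γ δ : Γ, δ ∈ Δ → 0 ≤ γ → γ ≤ δ → γ ∈ Δ)
    {n : ℕ} {α γ δ : Γ} (hδ : δ ∈ Δ) (hα : n • α < γ)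
    (hγ : ∀ y : Γ ⧸ Δ, n • y ≠ γ) : n • (α + δ) < γ := by
  have hγα : γ - n • α ∉ Δ := fun h =>
    hγ α (by rw [← QuotientAddGroup.mk_nsmul, eq_comm, QuotientAddGroup.eq_iff_sub_mem]; exact h)
  have hδγ : n • δ < γ - n • α :=
    not_le.1 fun h => hγα (hconv _ _ (Δ.nsmul_mem hδ n) (sub_nonneg.2 hα.le) h)
  rw [smul_add]
  exact lt_sub_iff_add_lt'.1 hδγ

theorem QuotientAddGroup.exists_nsmul_eq_of_forall_pos {n : ℕ}
    (h : ∀ γ : Γ, 0 < γ → ∃ y : Γ ⧸ Δ, n • y = γ) (x : Γ ⧸ Δ) : ∃ y, n • y = x := by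
  have hnonneg : ∀ γ : Γ, 0 ≤ γ → ∃ y : Γ ⧸ Δ, n • y = γ := fun γ hγ =>
    hγ.lt_or_eq.elim (h γ) fun h0 => ⟨0, by rw [smul_zero, ← h0, QuotientAddGroup.mk_zero]⟩
  obtain ⟨γ, rfl⟩ := QuotientAddGroup.mk_surjective x
  rcases le_total 0 γ with hγ | hγ
  · exact hnonneg γ hγ
  · obtain ⟨y, hy⟩ := hnonneg (-γ) (neg_nonneg.2 hγ)
    exact ⟨-y, by rw [smul_neg, hy, QuotientAddGroup.mk_neg, neg_neg]⟩

end OrderedGroup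

namespace AddValuation

variable {K Γ : Type*} [Field K] [AddCommGroup Γ] [LinearOrder Γ] [IsOrderedAddMonoid Γ]
  (v : AddValuation K (WithTop Γ)) {n : ℕ} {g : K}

open MvPolynomial in
noncomputable def witnessPoly (n : ℕ) (g : K) : MvPolynomial (Fin 2) K :=
  C (g ^ (n + 1)) * X 0 ^ n + (X 0 ^ n * X 1 - C g) ^ n

theorem eval_witnessPoly (b : Fin 2 → K) :
    MvPolynomial.eval b (witnessPoly n g) = g ^ (n + 1) * b 0 ^ n + (b 0 ^ n * b 1 - g) ^ n := by
  simp [witnessPoly]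

theorem ne_zero_of_forall_pow_ne (hn : n ≠ 0) (hpow : ∀ z, v (z ^ n) ≠ v g) : g ≠ 0 := by
  rintro rfl
  exact hpow 0 (by simp [hn])

theorem map_div_nonneg {a b : K} (hb : b ≠ 0) (h : v b ≤ v a) : 0 ≤ v (a / b) := by
  rwa [← add_le_add_iff_left_of_ne_top (v.ne_top_iff.2 hb),
    zero_add, ← v.map_mul, div_mul_cancel₀ _ hb]

theorem map_mul_pow_ne_of_forall_pow_ne (hpow : ∀ z, v (z ^ n) ≠ v g) {x : K} (hx : g * x ≠ 0)
    (b : K) : v (g ^ (n + 1) * x ^ n) ≠ v (b ^ n) := by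
  intro h
  have hgx : (g * x) ^ n ≠ 0 := pow_ne_zero n hx
  apply hpow (b / (g * x))
  refine WithTop.add_right_cancel (v.ne_top_iff.2 hgx) ?_
  rw [← v.map_mul, ← v.map_mul, div_pow, div_mul_cancel₀ _ hgx, ← h]
  ring_nf

theorem exists_le_map_mul_pow (hn : n ≠ 0) (hg : 0 < v g) (hpow : ∀ z, v (z ^ n) ≠ v g)
    {x y : K} (hx : 0 ≤ v x) (hy : 0 ≤ v y) :
    ∃ x', 0 ≤ v x' ∧ v (x' ^ n) < v g ∧
      v (g ^ (n + 1) * x ^ n + (x ^ n * y - g) ^ n) ≤ v (g ^ (n + 1) * x' ^ n) := by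
  have hg0 := v.ne_zero_of_forall_pow_ne hn hpow
  rcases (hpow x).lt_or_gt with hlt | hgt
  · have hx0 : x ≠ 0 := by rintro rfl; simp [hn] at hlt
    refine ⟨x, hx, hlt, ?_⟩
    rw [v.map_add_of_distinct_val (v.map_mul_pow_ne_of_forall_pow_ne hpow (mul_ne_zero hg0 hx0) _)]
    exact min_le_left _ _
  · refine ⟨1, by simp, by simpa using hg, ?_⟩
    have hgxy : v g < v (x ^ n * y) := by
      rw [v.map_mul]
      exact hgt.trans_le (le_add_of_nonneg_right hy)
    have hgn : v (g ^ n) ≠ ⊤ := v.ne_top_iff.2 (pow_ne_zero n hg0)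
    have hsecond : v ((x ^ n * y - g) ^ n) = v (g ^ n) := by
      rw [v.map_pow, v.map_sub_eq_of_lt_right hgxy, v.map_pow]
    have hfirst : v (g ^ n) < v (g ^ (n + 1) * x ^ n) := by
      have hpos : 0 < v (g * x ^ n) := by
        rw [v.map_mul]
        exact hg.trans_le (le_add_of_nonneg_right (hg.trans hgt).le)
      calc v (g ^ n) = v (g ^ n) + 0 := (add_zero _).symm
        _ < v (g ^ n) + v (g * x ^ n) := WithTop.add_lt_add_left hgn hpos
        _ = v (g ^ (n + 1) * x ^ n) := by rw [← v.map_mul]; ring_nf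
    rw [v.map_add_eq_of_lt_right (hsecond ▸ hfirst), hsecond, one_pow, mul_one, pow_succ,
      v.map_mul]
    exact le_add_of_nonneg_right hg.le

theorem not_isExtremal (hn : n ≠ 0) (hg : 0 < v g) (hpow : ∀ z, v (z ^ n) ≠ v g)
    (hstep : ∀ x, 0 ≤ v x → v (x ^ n) < v g →
      ∃ x', 0 ≤ v x' ∧ v (x ^ n) < v (x' ^ n) ∧ v (x' ^ n) < v g) :
    ¬ IsExtremal v := by
  intro hext
  obtain ⟨a, ha, hmax⟩ := hext 2 (witnessPoly n g)
  obtain ⟨x, hx, hxg, hbound⟩ := v.exists_le_map_mul_pow hn hg hpow (ha 0) (ha 1)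
  obtain ⟨x', hx', hxx', hx'g⟩ := hstep x hx hxg
  have hx'0 : x' ^ n ≠ 0 := v.ne_top_iff.1 (ne_top_of_lt hx'g)
  have hattained := hmax ![x', g / x' ^ n] fun i => by
    fin_cases i
    · exact hx'
    · exact v.map_div_nonneg hx'0 hx'g.le
  simp only [eval_witnessPoly, Matrix.cons_val_zero, Matrix.cons_val_one,
    mul_div_cancel₀ _ hx'0, sub_self, zero_pow hn, add_zero] at hattained
  have hgn : v (g ^ (n + 1)) ≠ ⊤ :=
    v.ne_top_iff.2 (pow_ne_zero _ (v.ne_zero_of_forall_pow_ne hn hpow))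
  have hlt : v (g ^ (n + 1) * x ^ n) < v (g ^ (n + 1) * x' ^ n) := by
    rw [v.map_mul, v.map_mul]
    exact WithTop.add_lt_add_left hgn hxx'
  exact (hattained.trans hbound).not_gt hlt

end AddValuation

/-- If `(K, Γ, k; v)` is an extremal valued field, then for every nonzero convex
subgroup `Δ` of `Γ` the quotient `Γ/Δ` is divisible. -/
theorem quotient_divisible_of_extremal {K Γ : Type*} [Field K]
    [AddCommGroup Γ] [LinearOrder Γ] [IsOrderedAddMonoid Γ] (v : AddValuation K (WithTop Γ))
    (hsurj : ∀ γ : Γ, ∃ x : K, v x = (γ : WithTop Γ))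
    (hext : IsExtremal v)
    (Δ : AddSubgroup Γ) (hΔ : Δ ≠ ⊥)
    (hconv : ∀ γ δ : Γ, δ ∈ Δ → 0 ≤ γ → γ ≤ δ → γ ∈ Δ) :
    ∀ (x : Γ ⧸ Δ) (n : ℕ), 0 < n → ∃ y : Γ ⧸ Δ, n • y = x := by
  intro x n hn
  obtain ⟨δ, hδΔ, hδ⟩ := AddSubgroup.exists_pos_mem_of_ne_bot_s9 hΔ
  refine QuotientAddGroup.exists_nsmul_eq_of_forall_pos (fun γ hγ => ?_) x
  by_contra! hndiv
  obtain ⟨g, hg⟩ := hsurj γ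
  have hval : ∀ z : K, v (z ^ n) ≠ ⊤ → ∃ α : Γ, (α : WithTop Γ) = v z := fun z hz =>
    WithTop.ne_top_iff_exists.1 (v.ne_top_iff.2 (ne_zero_pow hn.ne' (v.ne_top_iff.1 hz)))
  refine v.not_isExtremal hn.ne' (hg ▸ WithTop.coe_lt_coe.2 hγ) (fun z hz => ?_)
    (fun z hz hzg => ?_) hext
  · obtain ⟨α, hα⟩ := hval z (hz ▸ hg ▸ WithTop.coe_ne_top)
    rw [v.map_pow, ← hα, hg, ← WithTop.coe_nsmul, WithTop.coe_inj] at hz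
    exact hndiv α (by rw [← QuotientAddGroup.mk_nsmul, hz])
  · obtain ⟨α, hα⟩ := hval z (ne_top_of_lt hzg)
    obtain ⟨z', hz'⟩ := hsurj (α + δ)
    refine ⟨z', ?_, ?_, ?_⟩ <;>
      simp only [v.map_pow, ← hα, hz', hg, ← WithTop.coe_nsmul, WithTop.coe_lt_coe,
        WithTop.coe_nonneg] at hz hzg ⊢
    · exact add_nonneg hz hδ.le
    · exact nsmul_lt_nsmul_right hn.ne' (lt_add_of_pos_right α hδ)
    · exact nsmul_add_lt_of_convex hconv hδΔ hzg hndiv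
end

section
/- Let (K, Γ, k; v) be an extremal valued field. Then Γ is either divisible or a ℤ-group. -/
/-!
Suppose `ε > 0` is not divisible by `k`, and take `v c = γ > 0`, `v e = ε`. On the valuation ring,
the two terms of `F = (X ^ n * Y - c) ^ k - e * (X * (X ^ n * Y)) ^ k` have distinct values (they
differ modulo `k`), so `v F` is the smaller one. Putting `v X = s` and `X ^ n * Y = c` shows that
`v F` takes every value `ε + k (s + γ)` with `0 ≤ s`, `n s ≤ γ`. At a maximizer `v F ≥ ε + k γ > k γ`,
so `v (X ^ n * Y - c) > γ`; hence `v (X ^ n * Y) = γ` and `v F ≤ ε + k (v X + γ)`.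
So extremality gives every set `{s | 0 ≤ s ∧ n s ≤ γ}` a greatest element `s`.
In a densely ordered group `n s = γ`, contradicting the choice of `ε` for `n = k`, `γ = ε`. If `Γ`
has a least positive element `u`, it gives division with remainder `n δ ≤ α + n u < n (δ + u)`,
and an interval `(α, β)` containing `n` elements has `α + n u < β`, which is regularity.
-/

section OrderedGroup

open Finset

variable {Γ : Type*} [AddCommGroup Γ] [LinearOrder Γ] [IsOrderedAddMonoid Γ]

lemma exists_pos_forall_nsmul_ne {n : ℕ} {γ : Γ} (h : ∀ δ : Γ, n • δ ≠ γ) :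
    ∃ ε : Γ, 0 < ε ∧ ∀ δ : Γ, n • δ ≠ ε := by
  refine ⟨|γ|, abs_pos.mpr fun hγ => h 0 (by rw [smul_zero, hγ]), fun δ hδ => ?_⟩
  rcases abs_choice γ with hγ | hγ
  · exact h δ (hδ.trans hγ)
  · exact h (-δ) (by rw [smul_neg, hδ, hγ, neg_neg])

variable (Γ) in
lemma exists_isLeast_pos_or_denselyOrdered :
    (∃ u : Γ, IsLeast {y | 0 < y} u) ∨ DenselyOrdered Γ := by
  by_cases! H : ∃ u : Γ, IsLeast {y | 0 < y} u
  · exact Or.inl H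
  refine Or.inr ⟨fun a b hab => ?_⟩
  obtain ⟨z, hz, hzb⟩ : ∃ z : Γ, 0 < z ∧ z < b - a := by
    contrapose! H
    exact ⟨b - a, sub_pos.mpr hab, fun z hz => H z hz⟩
  exact ⟨a + z, lt_add_of_pos_right a hz, lt_sub_iff_add_lt'.mp hzb⟩

lemma nsmul_eq_of_isGreatest [DenselyOrdered Γ] {n : ℕ} {γ s : Γ}
    (hs : IsGreatest {s | 0 ≤ s ∧ n • s ≤ γ} s) : n • s = γ := by
  obtain ⟨⟨hs0, hsγ⟩, hmax⟩ := hs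
  refine hsγ.antisymm (not_lt.mp fun hlt => ?_)
  obtain ⟨h, hh, hnh⟩ := exists_nsmul_lt_of_pos (sub_pos.mpr hlt) n
  have hmem : s + h ∈ {s | 0 ≤ s ∧ n • s ≤ γ} :=
    ⟨add_nonneg hs0 hh.le, by rw [nsmul_add]; exact (lt_sub_iff_add_lt'.mp hnh).le⟩
  exact (lt_add_of_pos_right s hh).not_ge (hmax hmem)

lemma add_card_nsmul_lt {u : Γ} (hu : IsLeast {y | 0 < y} u) {α β : Γ} (s : Finset Γ)
    (hs : ↑s ⊆ Set.Ioo α β) (hαβ : α < β) : α + #s • u < β := by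
  classical
  induction s using Finset.induction_on_max generalizing β with
  | empty => simpa using hαβ
  | insert a s has ih =>
    have ha : a ∈ Set.Ioo α β := hs (mem_insert_self a s)
    have hsa : ↑s ⊆ Set.Ioo α a := fun x hx =>
      ⟨(hs (mem_insert_of_mem hx)).1, has x hx⟩
    rw [card_insert_of_notMem fun h => (has a h).false, succ_nsmul, ← add_assoc]
    calc α + #s • u + u ≤ a := le_sub_iff_add_le'.mp (hu.2 (sub_pos.mpr (ih hsa ha.1)))
      _ < β := ha.2

lemma exists_nsmul_mem_Ioc {n : ℕ} (hn : 0 < n) {u : Γ} (hu : 0 < u)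
    (h : ∀ γ : Γ, 0 < γ → ∃ s, IsGreatest {s | 0 ≤ s ∧ n • s ≤ γ} s) (α : Γ) :
    ∃ δ : Γ, n • δ ∈ Set.Ioc α (α + n • u) := by
  set l := |α| + u
  have hl : 0 ≤ l := add_nonneg (abs_nonneg α) hu.le
  have hγ : 0 < α + n • l := calc
    0 < α + |α| + u := add_pos_of_nonneg_of_pos (neg_le_iff_add_nonneg.mp (neg_abs_le α)) hu
    _ ≤ α + n • l := by rw [add_assoc]; gcongr; exact le_smul_of_one_le_left hl hn
  obtain ⟨s, ⟨hs0, hsγ⟩, hmax⟩ := h _ hγ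
  have hsu : α + n • l < n • (s + u) := not_le.mp fun hle =>
    (lt_add_of_pos_right s hu).not_ge (hmax ⟨add_nonneg hs0 hu.le, hle⟩)
  refine ⟨s + u - l, ?_, ?_⟩
  · rw [nsmul_sub]
    exact lt_sub_iff_add_lt.mpr hsu
  · rw [nsmul_sub, nsmul_add, sub_le_iff_le_add, add_right_comm]
    exact add_le_add_left hsγ _

lemma isRegularGroup_of_isLeast_pos {u : Γ} (hu : IsLeast {y | 0 < y} u)
    (h : ∀ n : ℕ, 0 < n → ∀ γ : Γ, 0 < γ → ∃ s, IsGreatest {s | 0 ≤ s ∧ n • s ≤ γ} s) :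
    IsRegularGroup Γ := by
  rintro n hn α β ⟨s, rfl, hs⟩
  obtain ⟨x, hx⟩ := card_pos.mp hn
  obtain ⟨δ, hαδ, hδβ⟩ := exists_nsmul_mem_Ioc hn hu.1 (h _ hn) α
  exact ⟨δ, hαδ, hδβ.trans_lt (add_card_nsmul_lt hu s hs ((hs hx).1.trans (hs hx).2))⟩

end OrderedGroup

section ValuedField

open MvPolynomial

variable {K Γ : Type*} [Field K] [AddCommGroup Γ] [LinearOrder Γ] [IsOrderedAddMonoid Γ]
  (v : AddValuation K (WithTop Γ))

lemma AddValuation.map_pow_sub_mul_pow {k : ℕ} (hk : k ≠ 0)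
    {e : K} {ε : Γ} (he : v e = ε) (hε : ∀ δ : Γ, k • δ ≠ ε) (P Q : K) :
    v (P ^ k - e * Q ^ k) = min (v (P ^ k)) (v (e * Q ^ k)) := by
  rcases eq_or_ne P 0 with rfl | hP
  · simp [zero_pow hk]
  rcases eq_or_ne Q 0 with rfl | hQ
  · simp [zero_pow hk]
  obtain ⟨p, hp⟩ := WithTop.ne_top_iff_exists.mp (v.ne_top_iff.mpr hP)
  obtain ⟨q, hq⟩ := WithTop.ne_top_iff_exists.mp (v.ne_top_iff.mpr hQ)
  rw [sub_eq_add_neg, v.map_add_of_distinct_val, v.map_neg]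
  rw [v.map_neg, v.map_mul, v.map_pow, v.map_pow, ← hp, ← hq, he, ← WithTop.coe_nsmul,
    ← WithTop.coe_nsmul, ← WithTop.coe_add, Ne, WithTop.coe_inj]
  intro h
  exact hε (p - q) (by rw [nsmul_sub, h, add_sub_cancel_right])

variable {v}

lemma exists_pow_mul_eq_of_nsmul_le (hsurj : ∀ γ : Γ, ∃ x : K, v x = γ) {n : ℕ} {c : K}
    {γ s : Γ} (hc : v c = γ) (hs : n • s ≤ γ) :
    ∃ x y : K, v x = s ∧ 0 ≤ v y ∧ x ^ n * y = c := by
  obtain ⟨x, hx⟩ := hsurj s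
  have hx0 : x ≠ 0 := v.ne_top_iff.mp (by simp [hx])
  refine ⟨x, c / x ^ n, hx, ?_, mul_div_cancel₀ c (pow_ne_zero n hx0)⟩
  rw [v.map_div, v.map_pow, hx, hc, ← WithTop.coe_nsmul,
    ← WithTop.LinearOrderedAddCommGroup.coe_sub, WithTop.coe_nonneg]
  exact sub_nonneg.mpr hs

lemma IsExtremal.exists_forall_map_eval_le (hext : IsExtremal v) (F : MvPolynomial (Fin 2) K) :
    ∃ a b : K, 0 ≤ v a ∧ 0 ≤ v b ∧
      ∀ x y : K, 0 ≤ v x → 0 ≤ v y → v (eval ![x, y] F) ≤ v (eval ![a, b] F) := by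
  obtain ⟨a, ha, hmax⟩ := hext 2 F
  refine ⟨a 0, a 1, ha 0, ha 1, fun x y hx hy => ?_⟩
  rw [show ![a 0, a 1] = a from funext fun i => by fin_cases i <;> rfl]
  exact hmax _ (Fin.forall_fin_two.mpr ⟨hx, hy⟩)

lemma IsExtremal.exists_isGreatest_nsmul_le (hsurj : ∀ γ : Γ, ∃ x : K, v x = γ)
    (hext : IsExtremal v) {k : ℕ} (hk : k ≠ 0) {ε : Γ} (hε : 0 < ε) (hεk : ∀ δ : Γ, k • δ ≠ ε)
    {n : ℕ} (hn : n ≠ 0) {γ : Γ} (hγ : 0 < γ) :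
    ∃ s, IsGreatest {s | 0 ≤ s ∧ n • s ≤ γ} s := by
  obtain ⟨c, hc⟩ := hsurj γ
  obtain ⟨e, he⟩ := hsurj ε
  obtain ⟨a, b, ha, hb, hmax⟩ := hext.exists_forall_map_eval_le
    ((X 0 ^ n * X 1 - C c) ^ k - C e * (X 0 * (X 0 ^ n * X 1)) ^ k)
  simp only [map_sub, map_mul, map_pow, eval_X, eval_C, Matrix.cons_val_zero,
    Matrix.cons_val_one, v.map_pow_sub_mul_pow hk he hεk] at hmax
  set μ := min (v ((a ^ n * b - c) ^ k)) (v (e * (a * (a ^ n * b)) ^ k))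
  have lower : ∀ s ∈ {s | 0 ≤ s ∧ n • s ≤ γ}, ((ε + k • (s + γ) : Γ) : WithTop Γ) ≤ μ := by
    rintro s ⟨hs0, hsγ⟩
    obtain ⟨x, y, hx, hy, hxy⟩ := exists_pow_mul_eq_of_nsmul_le hsurj hc hsγ
    convert hmax x y (hx ▸ WithTop.coe_nonneg.mpr hs0) hy using 1
    rw [hxy, sub_self, zero_pow hk, v.map_zero, v.map_mul, v.map_pow, v.map_mul, hx, hc, he]
    simp
  have hP : ↑γ < v (a ^ n * b - c) := by
    by_contra! hP
    have hμ : μ ≤ ↑(k • γ) := (min_le_left _ _).trans <| by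
      rw [v.map_pow, WithTop.coe_nsmul]
      exact nsmul_le_nsmul_right hP k
    have h0 := (lower 0 ⟨le_rfl, by rw [smul_zero]; exact hγ.le⟩).trans hμ
    rw [zero_add, WithTop.coe_le_coe] at h0
    exact (lt_add_of_pos_left _ hε).not_ge h0
  have hab : v (a ^ n * b) = γ := by
    rw [← sub_add_cancel (a ^ n * b) c, v.map_add_eq_of_lt_right (hc ▸ hP), hc]
  obtain ⟨s, hs⟩ : ∃ s : Γ, ↑s = v a := by
    refine WithTop.ne_top_iff_exists.mp (v.ne_top_iff.mpr fun ha0 => ?_)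
    rw [ha0, zero_pow hn, zero_mul, v.map_zero] at hab
    exact WithTop.top_ne_coe hab
  have hnsγ : n • s ≤ γ := by
    have h := le_add_of_nonneg_right (a := v (a ^ n)) hb
    rwa [← v.map_mul, hab, v.map_pow, ← hs, ← WithTop.coe_nsmul, WithTop.coe_le_coe] at h
  refine ⟨s, ⟨WithTop.coe_nonneg.mp (hs ▸ ha), hnsγ⟩, fun s' hs' => ?_⟩
  have h := (lower s' hs').trans <| (min_le_right _ _).trans_eq <| by
    rw [v.map_mul, v.map_pow, v.map_mul, ← hs, hab, he]
  norm_cast at h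
  rwa [add_le_add_iff_left, nsmul_le_nsmul_iff_right hk, add_le_add_iff_right] at h

end ValuedField

/-- The value group of an extremal valued field is divisible or a ℤ-group
(a regular ordered group with a smallest positive element). -/
theorem value_group_of_extremal {K Γ : Type*} [Field K]
    [AddCommGroup Γ] [LinearOrder Γ] [IsOrderedAddMonoid Γ] (v : AddValuation K (WithTop Γ))
    (hsurj : ∀ γ : Γ, ∃ x : K, v x = (γ : WithTop Γ))
    (hext : IsExtremal v) :
    (∀ (γ : Γ) (n : ℕ), 0 < n → ∃ δ : Γ, n • δ = γ) ∨
      (IsRegularGroup Γ ∧ ∃ γ : Γ, 0 < γ ∧ ∀ δ : Γ, 0 < δ → γ ≤ δ) := by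
  by_cases! hdiv : ∀ (γ : Γ) (n : ℕ), 0 < n → ∃ δ : Γ, n • δ = γ
  · exact Or.inl hdiv
  obtain ⟨γ₀, k, hk, hγ₀⟩ := hdiv
  obtain ⟨ε, hε, hεk⟩ := exists_pos_forall_nsmul_ne hγ₀
  have hfloor : ∀ n : ℕ, 0 < n → ∀ γ : Γ, 0 < γ → ∃ s, IsGreatest {s | 0 ≤ s ∧ n • s ≤ γ} s :=
    fun n hn γ hγ => hext.exists_isGreatest_nsmul_le hsurj hk.ne' hε hεk hn.ne' hγ
  rcases exists_isLeast_pos_or_denselyOrdered Γ with ⟨u, hu⟩ | hdense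
  · exact Or.inr ⟨isRegularGroup_of_isLeast_pos hu hfloor, u, hu⟩
  · obtain ⟨s, hs⟩ := hfloor k hk ε hε
    exact absurd (nsmul_eq_of_isGreatest hs) (hεk s)
end

section
/- Let (K, v) be a henselian valued field and let F(X,Y) = X^n + b_{n-1}X^{n-1}Y + ... + b_1 XY^{n-1} + b_0 Y^n over O_v be the homogenization of a degree-n polynomial whose reduction x^n + β_{n-1}x^{n-1} + ... + β_0 has no root in the residue field k. Then for all a, b ∈ K and all positive γ ∈ Γ: v(F(a,b)) ≥ γ implies v(a) ≥ γ/n and v(b) ≥ γ/n (i.e., n·v(a) ≥ γ and n·v(b) ≥ γ). -/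
/-!
Dehomogenize by whichever of `a`, `b` has the smaller value, `t`: then
`F(a, b) = tⁿ F(a/t, b/t)`, where `a/t` and `b/t` are integral and one of them is `1`.
The hypothesis on the reduction makes `F(a/t, b/t)` a unit, so
`v F(a, b) = n • min (v a) (v b)`, which bounds both `n • v a` and `n • v b` from below.
-/

variable {K Γ : Type*} [Field K] [AddCommGroup Γ] [LinearOrder Γ] [IsOrderedAddMonoid Γ]

/-- The valuation ring of an additive valuation on a field. -/
def valRing (v : AddValuation K (WithTop Γ)) : Subring K where
  carrier := {x | 0 ≤ v x}
  zero_mem' := by simp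
  one_mem' := by simp
  add_mem' := fun {a b} ha hb => le_trans (le_min ha hb) (v.map_add a b)
  mul_mem' := fun {a b} ha hb => by
    show (0:WithTop Γ) ≤ v (a*b); rw [v.map_mul]; exact add_nonneg ha hb
  neg_mem' := fun {a} ha => by show (0:WithTop Γ) ≤ v (-a); rw [v.map_neg]; exact ha

section HomogeneousForm

variable {n : ℕ}

def homForm (c : Fin n → K) (a b : K) : K :=
  a ^ n + ∑ i : Fin n, c i * a ^ (i : ℕ) * b ^ (n - (i : ℕ))

lemma homForm_mul_mul (c : Fin n → K) (t a b : K) :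
    homForm c (t * a) (t * b) = t ^ n * homForm c a b := by
  have ht : ∀ i : Fin n, t ^ n = t ^ (i : ℕ) * t ^ (n - (i : ℕ)) := fun i => by
    rw [← pow_add, Nat.add_sub_cancel' i.isLt.le]
  simp only [homForm, mul_add, Finset.mul_sum, mul_pow]
  congr 1
  refine Finset.sum_congr rfl fun i _ => ?_
  rw [ht i]
  ring

lemma homForm_zero_zero (c : Fin n → K) : homForm c 0 0 = 0 ^ n := by
  have hsum : ∀ i : Fin n, (0 : K) ^ (n - (i : ℕ)) = 0 := fun i =>
    zero_pow (Nat.sub_ne_zero_of_lt i.isLt)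
  simp [homForm, hsum]

lemma AddValuation.nonneg_div_of_le (v : AddValuation K (WithTop Γ)) {x t : K} (ht : t ≠ 0)
    (h : v t ≤ v x) : 0 ≤ v (x / t) := by
  rw [v.map_div]
  calc (0 : WithTop Γ) ≤ v t - v t := LinearOrderedAddCommGroupWithTop.sub_self_nonneg
    _ ≤ v x - v t :=
      (LinearOrderedAddCommGroupWithTop.sub_le_sub_iff_left_of_ne_top (v.ne_top_iff.2 ht)).2 h

section NoResidueRoot

variable (v : AddValuation K (WithTop Γ)) {c : Fin n → K}
  (hnoroot : ∀ α β : K, 0 ≤ v α → 0 ≤ v β → ¬(0 < v α ∧ 0 < v β) → v (homForm c α β) = 0)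
include hnoroot

lemma val_homForm_of_le {a b t : K} (ht : t ≠ 0) (hta : v t ≤ v a) (htb : v t ≤ v b)
    (hab : t = a ∨ t = b) : v (homForm c a b) = n • v t := by
  have hprim : ¬(0 < v (a / t) ∧ 0 < v (b / t)) := by
    rintro ⟨ha, hb⟩
    rcases hab with rfl | rfl
    · simp [div_self ht] at ha
    · simp [div_self ht] at hb
  have hunit := hnoroot _ _ (v.nonneg_div_of_le ht hta) (v.nonneg_div_of_le ht htb) hprim
  rw [← mul_div_cancel₀ a ht, ← mul_div_cancel₀ b ht, homForm_mul_mul, v.map_mul, v.map_pow,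
    hunit, add_zero]

lemma val_homForm (a b : K) : v (homForm c a b) = n • min (v a) (v b) := by
  by_cases h0 : a = 0 ∧ b = 0
  · obtain ⟨rfl, rfl⟩ := h0
    simp [homForm_zero_zero, v.map_pow]
  rcases le_total (v a) (v b) with h | h
  · have ha : a ≠ 0 := by
      rintro rfl
      exact h0 ⟨rfl, v.top_iff.1 (top_le_iff.1 (by simpa using h))⟩
    rw [min_eq_left h, val_homForm_of_le v hnoroot ha le_rfl h (Or.inl rfl)]
  · have hb : b ≠ 0 := by
      rintro rfl
      exact h0 ⟨v.top_iff.1 (top_le_iff.1 (by simpa using h)), rfl⟩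
    rw [min_eq_right h, val_homForm_of_le v hnoroot hb h le_rfl (Or.inr rfl)]

end NoResidueRoot

end HomogeneousForm

theorem homogenized_value_bound_general
    (v : AddValuation K (WithTop Γ))
    (n : ℕ) (c : Fin n → K)
    (hnoroot : ∀ α β : K, 0 ≤ v α → 0 ≤ v β → ¬(0 < v α ∧ 0 < v β) →
      v (α ^ n + ∑ i : Fin n, c i * α ^ (i : ℕ) * β ^ (n - (i : ℕ))) = 0) :
    ∀ a b : K, ∀ γ : Γ, 0 < γ →
      (γ : WithTop Γ) ≤ v (a ^ n + ∑ i : Fin n, c i * a ^ (i : ℕ) * b ^ (n - (i : ℕ))) →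
      (γ : WithTop Γ) ≤ n • v a ∧ (γ : WithTop Γ) ≤ n • v b := by
  intro a b γ _ hF
  have hval : v (homForm c a b) = n • min (v a) (v b) := val_homForm v hnoroot a b
  rw [homForm] at hval
  rw [hval] at hF
  exact ⟨hF.trans (nsmul_le_nsmul_right (min_le_left _ _) n),
    hF.trans (nsmul_le_nsmul_right (min_le_right _ _) n)⟩

/-- Let `(K,v)` be a henselian valued field, and let
`F(X,Y) = Xⁿ + c_{n-1}X^{n-1}Y + ⋯ + c₀Yⁿ` be the homogenization of a monic degree-`n`
polynomial with coefficients `cᵢ` in the valuation ring whose reduction has no root in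
the residue field (expressed below: `F` takes value `0` at every pair of elements of the
valuation ring which are not both in the maximal ideal).  Then for all `a b : K` and
every positive `γ ∈ Γ`: if `v (F a b) ≥ γ` then `n • v a ≥ γ` and `n • v b ≥ γ`. -/
theorem homogenized_value_bound
    (v : AddValuation K (WithTop Γ))
    (hH : HenselianLocalRing (valRing v))
    (n : ℕ) (hn : 0 < n) (c : Fin n → K) (hc : ∀ i, 0 ≤ v (c i))
    (hnoroot : ∀ α β : K, 0 ≤ v α → 0 ≤ v β → ¬(0 < v α ∧ 0 < v β) →
      v (α ^ n + ∑ i : Fin n, c i * α ^ (i : ℕ) * β ^ (n - (i : ℕ))) = 0) :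
    ∀ a b : K, ∀ γ : Γ, 0 < γ →
      (γ : WithTop Γ) ≤ v (a ^ n + ∑ i : Fin n, c i * a ^ (i : ℕ) * b ^ (n - (i : ℕ))) →
      (γ : WithTop Γ) ≤ n • v a ∧ (γ : WithTop Γ) ≤ n • v b :=
  homogenized_value_bound_general v n c hnoroot
end

section
/- Let p be prime, K = 𝔽_p((t)) with t-adic valuation, and in the construction of Kuhlmann's extension (L, v) of (K, v_t), with ξ_1 = x^{1/p}, ξ_{j+1} = (ξ_j - t·s^{-p/q_j})^{1/p}, a_k = Σ_{j=1}^k ξ_j and b_k = Σ_{j=1}^{k-1} s^{-1/q_j}. Then x - (a_k^p - a_k) - t·b_k^p = ξ_k for all k ≥ 1, and consequently w(G(a_k, b_k)) = w(ξ_k) = -(1/p^k)·w(s) < 0 for G(X_0,X_1) = X_0^p - X_0 + tX_1^p - x. -/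
private lemma nsmul_top_eq {n : ℕ} (hn : n ≠ 0) : n • (⊤ : WithTop ℚ) = ⊤ := by
  obtain ⟨m, rfl⟩ := Nat.exists_eq_succ_of_ne_zero hn
  rw [succ_nsmul, add_top]

private lemma eq_div_of_nsmul_eq {n : ℕ} (hn : n ≠ 0) {a : WithTop ℚ} {c : ℚ}
    (h : n • a = (c : WithTop ℚ)) : a = ((c / n : ℚ) : WithTop ℚ) := by
  induction a using WithTop.recTopCoe with
  | top => rw [nsmul_top_eq hn] at h; exact absurd h.symm (WithTop.coe_ne_top)
  | coe b =>
    rw [← WithTop.coe_nsmul] at h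
    have hb : n • b = c := WithTop.coe_injective h
    have : b = c / n := by
      field_simp
      rw [← hb, nsmul_eq_mul]
      ring
    rw [this]

/-- In Kuhlmann's construction over `𝔽_p((t))`: in a valued field `(L, w)` of
characteristic `p` containing `s`, `t` and elements `ξ j` (with `ξ 1 = x^{1/p}` for
`x = s⁻¹` and `ξ (j+1) = (ξ j - t·s^{-p/q_j})^{1/p}`, where `r j = s^{-1/q_j}`), set
`a k = ∑_{j=1}^k ξ j` and `b k = ∑_{j=1}^{k-1} r j`.  Then
`x - (a_k^p - a_k) - t·b_k^p = ξ k`, and consequently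
`w (G (a_k, b_k)) = w (ξ k) = -(1/p^k)·w s < 0` for `G(X₀,X₁) = X₀^p - X₀ + tX₁^p - x`. -/
theorem kuhlmann_telescoping {L : Type*} [Field L] (p : ℕ) (hp : p.Prime) [CharP L p]
    (w : AddValuation L (WithTop ℚ))
    (s t : L) (σ : ℚ) (hσ : 0 < σ) (hws : w s = (σ : WithTop ℚ))
    (q : ℕ → ℕ) (hq : ∀ j, 0 < q j) (r ξ : ℕ → L)
    (hr : ∀ j, 1 ≤ j → r j ^ q j = s⁻¹)
    (hξ1 : ξ 1 ^ p = s⁻¹)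
    (hξ : ∀ j, 1 ≤ j → ξ (j + 1) ^ p = ξ j - t * r j ^ p)
    (hval : ∀ j, 1 ≤ j → w (ξ j) < w (t * r j ^ p)) :
    ∀ k, 1 ≤ k →
      (s⁻¹ - ((∑ j ∈ Finset.Icc 1 k, ξ j) ^ p - ∑ j ∈ Finset.Icc 1 k, ξ j)
          - t * (∑ j ∈ Finset.Icc 1 (k - 1), r j) ^ p = ξ k) ∧
      w ((∑ j ∈ Finset.Icc 1 k, ξ j) ^ p - (∑ j ∈ Finset.Icc 1 k, ξ j)
            + t * (∑ j ∈ Finset.Icc 1 (k - 1), r j) ^ p - s⁻¹)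
        = ((-(1 / p ^ k) * σ : ℚ) : WithTop ℚ) ∧
      ((-(1 / p ^ k) * σ : ℚ) : WithTop ℚ) < 0 := by
  have hp0 : p ≠ 0 := hp.ne_zero
  haveI : Fact p.Prime := ⟨hp⟩
  have hpQ : (0 : ℚ) < (p : ℚ) := by exact_mod_cast hp.pos
  -- s ≠ 0
  have hs0 : s ≠ 0 := by
    intro h
    rw [h, AddValuation.map_zero] at hws
    exact WithTop.coe_ne_top hws.symm
  have hwsinv : w s⁻¹ = ((-σ : ℚ) : WithTop ℚ) := by
    rw [AddValuation.map_inv, hws]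
    rfl
  -- main induction: telescoping identity and value of w (ξ k)
  have main : ∀ k, 1 ≤ k →
      (s⁻¹ - ((∑ j ∈ Finset.Icc 1 k, ξ j) ^ p - ∑ j ∈ Finset.Icc 1 k, ξ j)
          - t * (∑ j ∈ Finset.Icc 1 (k - 1), r j) ^ p = ξ k) ∧
      w (ξ k) = ((-(1 / p ^ k) * σ : ℚ) : WithTop ℚ) := by
    intro k hk
    induction k with
    | zero => omega
    | succ n ih =>
      rcases Nat.eq_or_lt_of_le hk with h1 | h1
      · -- base case n + 1 = 1
        obtain rfl : n = 0 := by omega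
        constructor
        · rw [show (1:ℕ) - 1 = 0 from rfl, show Finset.Icc 1 0 = (∅ : Finset ℕ) by simp,
            Finset.Icc_self, Finset.sum_singleton, Finset.sum_empty, hξ1, zero_pow hp0]
          ring
        · have h : p • w (ξ 1) = ((-σ : ℚ) : WithTop ℚ) := by
            rw [← AddValuation.map_pow, hξ1, hwsinv]
          have hpne : (p : ℚ) ≠ 0 := ne_of_gt hpQ
          have hc : (-σ : ℚ) / p = -(1 / p ^ 1) * σ := by
            rw [pow_one]; ring
          rw [eq_div_of_nsmul_eq hp0 h, hc]
        -- done base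
      · -- inductive step: n ≥ 1
        have hn : 1 ≤ n := by omega
        obtain ⟨m, rfl⟩ : ∃ m, n = m + 1 := ⟨n - 1, by omega⟩
        set n := m + 1 with hnm
        obtain ⟨ihEq, ihVal⟩ := ih hn
        have hsum1 : ∑ j ∈ Finset.Icc 1 (n + 1), ξ j
            = (∑ j ∈ Finset.Icc 1 n, ξ j) + ξ (n + 1) :=
          Finset.sum_Icc_succ_top (by omega) ξ
        have hsum2 : ∑ j ∈ Finset.Icc 1 (n + 1 - 1), r j
            = (∑ j ∈ Finset.Icc 1 (n - 1), r j) + r n :=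
          Finset.sum_Icc_succ_top (by omega) r
        have hξn := hξ n hn
        have hvaln : w (ξ n - t * r n ^ p) = w (ξ n) := by
          rw [sub_eq_add_neg]
          apply AddValuation.map_add_eq_of_lt_left
          rw [AddValuation.map_neg]
          exact hval n hn
        constructor
        · rw [hsum1, hsum2, add_pow_char, add_pow_char]
          linear_combination ihEq - hξn
        · have h : p • w (ξ (n + 1)) = ((-(1 / p ^ n) * σ : ℚ) : WithTop ℚ) := by
            rw [← AddValuation.map_pow, hξn, hvaln, ihVal]
          have hpne : (p : ℚ) ≠ 0 := ne_of_gt hpQ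
          have hc : (-(1 / p ^ n) * σ : ℚ) / p = -(1 / p ^ (n + 1)) * σ := by
            rw [pow_succ]; ring
          rw [eq_div_of_nsmul_eq hp0 h, hc]
  intro k hk
  obtain ⟨hEq, hVal⟩ := main k hk
  have hneg : ((-(1 / p ^ k) * σ : ℚ) : WithTop ℚ) < 0 := by
    rw [show (0 : WithTop ℚ) = ((0 : ℚ) : WithTop ℚ) from rfl, WithTop.coe_lt_coe]
    have : (0:ℚ) < (p:ℚ) ^ k := by positivity
    have h1 : (0:ℚ) < (1 / p ^ k) * σ := by positivity
    linarith
  refine ⟨hEq, ?_, hneg⟩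
  have : (∑ j ∈ Finset.Icc 1 k, ξ j) ^ p - (∑ j ∈ Finset.Icc 1 k, ξ j)
      + t * (∑ j ∈ Finset.Icc 1 (k - 1), r j) ^ p - s⁻¹ = -(ξ k) := by
    linear_combination -hEq
  rw [this, AddValuation.map_neg, hVal]
end

section
/- Let F(X,Y) = s^{-p}X^p - s^{-1}X + t·s^{-p}Y^p - s^{-1} over a valued field (L, w) of characteristic p containing elements s, t with w(s) > 0, and suppose G(X_0, X_1) = X_0^p - X_0 + tX_1^p - s^{-1} satisfies w(G(x_0, x_1)) < 0 for all x_0, x_1 ∈ L. If additionally there are elements a_k, b_k ∈ L with s·a_k, s·b_k ∈ O_w and w(G(a_k, b_k)) = -(1/p^k)·w(s), then the set {w(F(a,b)) : a, b ∈ O_w} is a cofinal subset of the negative part of the value group and hence has no maximal element; in particular (L, w) is not extremal. -/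
/-!
Substituting `X = s·X₀`, `Y = s·X₁` turns `F` into `G`, and `X, Y ∈ O_w` iff `X₀, X₁ ∈ s⁻¹O_w`.
So every value of `F` on `O_w` is a value of `G`, hence negative, while `F` attains on `O_w` the
values `w (G (a k) (b k)) = -σ/p^k`, which tend to `0`. Negative values approaching `0` have
no maximum.
-/

theorem exists_le_neg_one_div_pow_mul {K : Type*} [Field K] [LinearOrder K]
    [IsStrictOrderedRing K] [Archimedean K] {r : K} (hr : 1 < r) (σ : K) {γ : K} (hγ : γ < 0) :
    ∃ k : ℕ, γ ≤ -(1 / r ^ k) * σ := by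
  obtain ⟨k, hk⟩ := pow_unbounded_of_one_lt (σ / -γ) hr
  have hrk : 0 < r ^ k := pow_pos (zero_lt_one.trans hr) k
  refine ⟨k, ?_⟩
  rw [div_lt_iff₀ (neg_pos.2 hγ)] at hk
  rw [neg_mul, one_div_mul_eq_div, le_neg, div_le_iff₀ hrk]
  linarith

theorem not_isExtremal_of_forall_exists_lt_eval_fin_two {K Γ : Type*} [Field K]
    [AddCommGroup Γ] [LinearOrder Γ] [IsOrderedAddMonoid Γ] (v : AddValuation K (WithTop Γ))
    (F : MvPolynomial (Fin 2) K)
    (h : ∀ x y : K, 0 ≤ v x → 0 ≤ v y → ∃ x' y' : K, 0 ≤ v x' ∧ 0 ≤ v y' ∧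
      v (MvPolynomial.eval ![x, y] F) < v (MvPolynomial.eval ![x', y'] F)) :
    ¬IsExtremal v := by
  intro hext
  obtain ⟨c, hc, hmax⟩ := hext 2 F
  obtain ⟨x', y', hx', hy', hlt⟩ := h (c 0) (c 1) (hc 0) (hc 1)
  have hc_eq : ![c 0, c 1] = c := by
    ext i
    fin_cases i <;> rfl
  refine (hmax ![x', y'] fun i => ?_).not_gt (hc_eq ▸ hlt)
  fin_cases i
  exacts [hx', hy']

theorem not_extremal_of_cofinal_values_general {L : Type*} [Field L]
    (p : ℕ) (hp : p.Prime) [CharP L p]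
    (w : AddValuation L (WithTop ℚ)) (s t : L)
    (σ : ℚ)
    (hG : ∀ x₀ x₁ : L, w (x₀ ^ p - x₀ + t * x₁ ^ p - s⁻¹) < 0)
    (a b : ℕ → L)
    (hmem : ∀ k, 0 ≤ w (s * a k) ∧ 0 ≤ w (s * b k))
    (hval : ∀ k, w (a k ^ p - a k + t * b k ^ p - s⁻¹)
      = ((-(1 / p ^ k) * σ : ℚ) : WithTop ℚ)) :
    (∀ x y : L, 0 ≤ w x → 0 ≤ w y →
      w (s⁻¹ ^ p * x ^ p - s⁻¹ * x + t * s⁻¹ ^ p * y ^ p - s⁻¹) < 0) ∧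
    (∀ γ : ℚ, γ < 0 → ∃ x y : L, 0 ≤ w x ∧ 0 ≤ w y ∧
      (γ : WithTop ℚ) ≤ w (s⁻¹ ^ p * x ^ p - s⁻¹ * x + t * s⁻¹ ^ p * y ^ p - s⁻¹)) ∧
    (∀ x y : L, 0 ≤ w x → 0 ≤ w y → ∃ x' y' : L, 0 ≤ w x' ∧ 0 ≤ w y' ∧
      w (s⁻¹ ^ p * x ^ p - s⁻¹ * x + t * s⁻¹ ^ p * y ^ p - s⁻¹) <
        w (s⁻¹ ^ p * x' ^ p - s⁻¹ * x' + t * s⁻¹ ^ p * y' ^ p - s⁻¹)) ∧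
    ¬IsExtremal w := by
  have hs : s ≠ 0 := by
    rintro rfl
    simpa [hp.ne_zero] using hG 0 0
  have hFG (x y : L) : s⁻¹ ^ p * x ^ p - s⁻¹ * x + t * s⁻¹ ^ p * y ^ p - s⁻¹ =
      (s⁻¹ * x) ^ p - s⁻¹ * x + t * (s⁻¹ * y) ^ p - s⁻¹ := by
    ring
  have neg (x y : L) (_ : 0 ≤ w x) (_ : 0 ≤ w y) :
      w (s⁻¹ ^ p * x ^ p - s⁻¹ * x + t * s⁻¹ ^ p * y ^ p - s⁻¹) < 0 :=
    hFG x y ▸ hG _ _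
  have cofinal (γ : ℚ) (hγ : γ < 0) : ∃ x y : L, 0 ≤ w x ∧ 0 ≤ w y ∧
      (γ : WithTop ℚ) ≤ w (s⁻¹ ^ p * x ^ p - s⁻¹ * x + t * s⁻¹ ^ p * y ^ p - s⁻¹) := by
    have hp1 : (1 : ℚ) < p := by exact_mod_cast hp.one_lt
    obtain ⟨k, hk⟩ := exists_le_neg_one_div_pow_mul hp1 σ hγ
    refine ⟨s * a k, s * b k, (hmem k).1, (hmem k).2, ?_⟩
    rw [hFG, inv_mul_cancel_left₀ hs, inv_mul_cancel_left₀ hs, hval k]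
    exact_mod_cast hk
  have no_max (x y : L) (hx : 0 ≤ w x) (hy : 0 ≤ w y) : ∃ x' y' : L, 0 ≤ w x' ∧ 0 ≤ w y' ∧
      w (s⁻¹ ^ p * x ^ p - s⁻¹ * x + t * s⁻¹ ^ p * y ^ p - s⁻¹) <
        w (s⁻¹ ^ p * x' ^ p - s⁻¹ * x' + t * s⁻¹ ^ p * y' ^ p - s⁻¹) := by
    obtain ⟨γ, hxγ, hγ⟩ := WithTop.lt_iff_exists_coe_btwn.1 (neg x y hx hy)
    obtain ⟨x', y', hx', hy', hγle⟩ := cofinal γ (by exact_mod_cast hγ)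
    exact ⟨x', y', hx', hy', hxγ.trans_le hγle⟩
  open MvPolynomial in
  refine ⟨neg, cofinal, no_max, not_isExtremal_of_forall_exists_lt_eval_fin_two w
    (C (s⁻¹ ^ p) * X 0 ^ p - C s⁻¹ * X 0 + C (t * s⁻¹ ^ p) * X 1 ^ p - C s⁻¹) ?_⟩
  simpa [mul_assoc] using no_max

/-- For `F(X,Y) = s^{-p}X^p - s^{-1}X + t·s^{-p}Y^p - s^{-1}` over a valued field
`(L, w)` of characteristic `p` with `w s > 0`: if
`G(X₀,X₁) = X₀^p - X₀ + tX₁^p - s⁻¹` has `w (G x₀ x₁) < 0` for all `x₀ x₁ ∈ L`, and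
there are `a k`, `b k` with `s·(a k), s·(b k) ∈ O_w` and
`w (G (a k) (b k)) = -(1/p^k)·w s`, then the values of `F` on the valuation ring all
lie in the negative part of the value group and form a cofinal subset of it; hence
they have no maximal element and `(L, w)` is not extremal. -/
theorem not_extremal_of_cofinal_values {L : Type*} [Field L]
    (p : ℕ) (hp : p.Prime) [CharP L p]
    (w : AddValuation L (WithTop ℚ)) (s t : L)
    (σ : ℚ) (hσ : 0 < σ) (hws : w s = (σ : WithTop ℚ))
    (hG : ∀ x₀ x₁ : L, w (x₀ ^ p - x₀ + t * x₁ ^ p - s⁻¹) < 0)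
    (a b : ℕ → L)
    (hmem : ∀ k, 0 ≤ w (s * a k) ∧ 0 ≤ w (s * b k))
    (hval : ∀ k, w (a k ^ p - a k + t * b k ^ p - s⁻¹)
      = ((-(1 / p ^ k) * σ : ℚ) : WithTop ℚ)) :
    (∀ x y : L, 0 ≤ w x → 0 ≤ w y →
      w (s⁻¹ ^ p * x ^ p - s⁻¹ * x + t * s⁻¹ ^ p * y ^ p - s⁻¹) < 0) ∧
    (∀ γ : ℚ, γ < 0 → ∃ x y : L, 0 ≤ w x ∧ 0 ≤ w y ∧
      (γ : WithTop ℚ) ≤ w (s⁻¹ ^ p * x ^ p - s⁻¹ * x + t * s⁻¹ ^ p * y ^ p - s⁻¹)) ∧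
    (∀ x y : L, 0 ≤ w x → 0 ≤ w y → ∃ x' y' : L, 0 ≤ w x' ∧ 0 ≤ w y' ∧
      w (s⁻¹ ^ p * x ^ p - s⁻¹ * x + t * s⁻¹ ^ p * y ^ p - s⁻¹) <
        w (s⁻¹ ^ p * x' ^ p - s⁻¹ * x' + t * s⁻¹ ^ p * y' ^ p - s⁻¹)) ∧
    ¬IsExtremal w :=
  not_extremal_of_cofinal_values_general p hp w s t σ hG a b hmem hval
end
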